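/- arXiv:2212.06410 — 10 statements merged into one kernel-verified Lean document; each statement's English description precedes it below -/
import Mathlib

section
/- (Jensen-type inequality for the gradient) Suppose f is twice differentiable with M_f-Lipschitz Hessian. Then for any n ≥ 1, any points z_1, …, z_n ∈ ℝ^d and any weights λ_1, …, λ_n ≥ 0 with Σ_{i=1}^n λ_i = 1, one has ‖∇f(Σ_{i=1}^n λ_i z_i) − Σ_{i=1}^n λ_i ∇f(z_i)‖ ≤ (M_f/2) · Σ_{1≤i<j≤n} λ_i λ_j ‖z_i − z_j‖². -/
theorem taylor_grad {E F : Type*} [NormedAddCommGroup E] [NormedSpace ℝ E]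
    [NormedAddCommGroup F] [NormedSpace ℝ F] (g : E → F) (M : ℝ)
    (hg : Differentiable ℝ g)
    (hM : ∀ a b : E, ‖fderiv ℝ g a - fderiv ℝ g b‖ ≤ M * ‖a - b‖) (a b : E) :
    ‖g b - g a - fderiv ℝ g a (b - a)‖ ≤ M / 2 * ‖b - a‖ ^ 2 := by
  set v := b - a with hv
  set φ : ℝ → F := fun t => g (a + t • v) - g a - t • (fderiv ℝ g a v) with hφ
  set φ' : ℝ → F := fun t => fderiv ℝ g (a + t • v) v - fderiv ℝ g a v with hφ'
  have hcurve : ∀ t : ℝ, HasDerivAt (fun t : ℝ => a + t • v) v t := by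
    intro t
    simpa using (HasDerivAt.const_add a ((hasDerivAt_id t).smul_const v))
  have hderiv : ∀ t : ℝ, HasDerivAt φ (φ' t) t := by
    intro t
    have h1 : HasDerivAt (fun t : ℝ => g (a + t • v)) (fderiv ℝ g (a + t • v) v) t :=
      (hg (a + t • v)).hasFDerivAt.comp_hasDerivAt t (hcurve t)
    have h2 := (h1.sub ((hasDerivAt_id t).smul_const (fderiv ℝ g a v))).sub_const (g a)
    simp only [one_smul] at h2
    convert h2 using 2 with x
    simp only [φ, Pi.sub_apply, id_eq]; abel
  have key := image_norm_le_of_norm_deriv_right_le_deriv_boundary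
    (f := φ) (f' := φ') (a := 0) (b := 1)
    (fun t _ => ((hderiv t).continuousAt.continuousWithinAt))
    (fun t _ => (hderiv t).hasDerivWithinAt)
    (B := fun t => M / 2 * ‖v‖ ^ 2 * t ^ 2) (B' := fun t => M * ‖v‖ ^ 2 * t)
    (by simp [φ])
    (fun t => by
      have h := (hasDerivAt_pow 2 t).const_mul (M / 2 * ‖v‖ ^ 2)
      refine h.congr_deriv ?_
      ring)
    ?_ (by norm_num : (1:ℝ) ∈ Set.Icc (0:ℝ) 1)
  · have h1 : φ 1 = g b - g a - fderiv ℝ g a (b - a) := by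
      simp [φ, hv]
    calc ‖g b - g a - fderiv ℝ g a (b - a)‖ = ‖φ 1‖ := by rw [h1]
      _ ≤ M / 2 * ‖v‖ ^ 2 * 1 ^ 2 := key
      _ = M / 2 * ‖b - a‖ ^ 2 := by ring
  · intro t ht
    have h2 : ‖φ' t‖ ≤ ‖fderiv ℝ g (a + t • v) - fderiv ℝ g a‖ * ‖v‖ := by
      simpa [φ'] using (fderiv ℝ g (a + t • v) - fderiv ℝ g a).le_opNorm v
    have h3 : ‖fderiv ℝ g (a + t • v) - fderiv ℝ g a‖ ≤ M * (t * ‖v‖) := by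
      have := hM (a + t • v) a
      simpa [norm_smul, Real.norm_of_nonneg ht.1] using this
    calc ‖φ' t‖ ≤ (M * (t * ‖v‖)) * ‖v‖ := by
          refine h2.trans (mul_le_mul_of_nonneg_right h3 (norm_nonneg v))
      _ = M * ‖v‖ ^ 2 * t := by ring

theorem double_sym {n : ℕ} (e : Fin n → Fin n → ℝ)
    (hdiag : ∀ i, e i i = 0) (hsymm : ∀ i j, e i j = e j i) :
    ∑ i, ∑ j, e i j = 2 * ∑ i, ∑ j, (if i < j then e i j else 0) := by
  have step : ∀ i j : Fin n, e i j =
      (if i < j then e i j else 0) + (if j < i then e i j else 0) := by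
    intro i j
    rcases lt_trichotomy i j with h | h | h
    · simp [h, not_lt.mpr h.le]
    · subst h; simp [hdiag]
    · simp [h, not_lt.mpr h.le]
  calc ∑ i, ∑ j, e i j
      = ∑ i, ∑ j, ((if i < j then e i j else 0) + (if j < i then e i j else 0)) := by
        exact Finset.sum_congr rfl fun i _ => Finset.sum_congr rfl fun j _ => step i j
    _ = (∑ i, ∑ j, (if i < j then e i j else 0)) + ∑ i, ∑ j, (if j < i then e i j else 0) := by
        simp_rw [Finset.sum_add_distrib]
    _ = (∑ i, ∑ j, (if i < j then e i j else 0)) + ∑ j, ∑ i, (if j < i then e i j else 0) := by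
        congr 1
        exact Finset.sum_comm
    _ = 2 * ∑ i, ∑ j, (if i < j then e i j else 0) := by
        rw [two_mul]
        congr 1
        exact Finset.sum_congr rfl fun j _ => Finset.sum_congr rfl fun i _ => by
          rw [hsymm]

open Finset RealInnerProductSpace in
theorem weighted_var {E : Type*} [NormedAddCommGroup E] [InnerProductSpace ℝ E]
    {n : ℕ} (z : Fin n → E) (lam : Fin n → ℝ) (hsum : ∑ i, lam i = 1) :
    ∑ i, lam i * ‖z i - ∑ j, lam j • z j‖ ^ 2 =
      ∑ i, ∑ j, (if i < j then lam i * lam j * ‖z i - z j‖ ^ 2 else 0) := by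
  set zb : E := ∑ j, lam j • z j with hzb
  have hinner : ∑ i, lam i * ⟪z i, zb⟫ = ‖zb‖ ^ 2 := by
    rw [← real_inner_self_eq_norm_sq, hzb, sum_inner]
    simp [real_inner_smul_left]
  have hS : ∑ i, lam i * ‖z i - zb‖ ^ 2 = (∑ i, lam i * ‖z i‖ ^ 2) - ‖zb‖ ^ 2 := by
    simp_rw [norm_sub_sq_real, mul_add, mul_sub, Finset.sum_add_distrib,
      Finset.sum_sub_distrib]
    rw [← Finset.sum_mul, hsum]
    have h2 : ∑ x, lam x * (2 * ⟪z x, zb⟫) = 2 * ‖zb‖ ^ 2 := by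
      rw [← hinner, Finset.mul_sum]
      exact Finset.sum_congr rfl fun i _ => by ring
    rw [h2]; ring
  have hzz : ∑ i, ∑ j, lam i * lam j * ⟪z i, z j⟫ = ‖zb‖ ^ 2 := by
    rw [← real_inner_self_eq_norm_sq, hzb, sum_inner]
    simp only [real_inner_smul_left, inner_sum, real_inner_smul_right, Finset.mul_sum]
    exact Finset.sum_congr rfl fun i _ => Finset.sum_congr rfl fun j _ => by ring
  have e1 : ∑ i, ∑ j, lam i * lam j * ‖z i‖ ^ 2 = ∑ i, lam i * ‖z i‖ ^ 2 := by
    refine Finset.sum_congr rfl fun i _ => ?_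
    calc ∑ j, lam i * lam j * ‖z i‖ ^ 2 = (lam i * ‖z i‖ ^ 2) * ∑ j, lam j := by
          rw [Finset.mul_sum]; exact Finset.sum_congr rfl fun j _ => by ring
      _ = lam i * ‖z i‖ ^ 2 := by rw [hsum]; ring
  have e2 : ∑ i, ∑ j, lam i * lam j * ‖z j‖ ^ 2 = ∑ j, lam j * ‖z j‖ ^ 2 := by
    rw [Finset.sum_comm]
    refine Finset.sum_congr rfl fun j _ => ?_
    calc ∑ i, lam i * lam j * ‖z j‖ ^ 2 = (lam j * ‖z j‖ ^ 2) * ∑ i, lam i := by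
          rw [Finset.mul_sum]; exact Finset.sum_congr rfl fun i _ => by ring
      _ = lam j * ‖z j‖ ^ 2 := by rw [hsum]; ring
  have split : ∑ i, ∑ j, lam i * lam j * ‖z i - z j‖ ^ 2 =
      (∑ i, ∑ j, lam i * lam j * ‖z i‖ ^ 2) + (∑ i, ∑ j, lam i * lam j * ‖z j‖ ^ 2)
        - 2 * ∑ i, ∑ j, lam i * lam j * ⟪z i, z j⟫ := by
    rw [Finset.mul_sum, ← Finset.sum_add_distrib, ← Finset.sum_sub_distrib]
    refine Finset.sum_congr rfl fun i _ => ?_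
    rw [Finset.mul_sum, ← Finset.sum_add_distrib, ← Finset.sum_sub_distrib]
    refine Finset.sum_congr rfl fun j _ => ?_
    rw [norm_sub_sq_real]; ring
  have hD : ∑ i, ∑ j, lam i * lam j * ‖z i - z j‖ ^ 2 =
      2 * ((∑ i, lam i * ‖z i‖ ^ 2) - ‖zb‖ ^ 2) := by
    rw [split, e1, e2, hzz]; ring
  have hsymm : ∑ i, ∑ j, lam i * lam j * ‖z i - z j‖ ^ 2 =
      2 * ∑ i, ∑ j, (if i < j then lam i * lam j * ‖z i - z j‖ ^ 2 else 0) :=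
    double_sym (fun i j => lam i * lam j * ‖z i - z j‖ ^ 2)
      (fun i => by simp) (fun i j => by
        show lam i * lam j * ‖z i - z j‖ ^ 2 = lam j * lam i * ‖z j - z i‖ ^ 2
        rw [norm_sub_rev]; ring)
  rw [hS]
  linarith [hD, hsymm]

/-- **Jensen-type inequality for the gradient.**
If `f : ℝ^d → ℝ` is twice differentiable with `M_f`-Lipschitz Hessian, then for any `n ≥ 1`,
points `z_1, …, z_n` and nonnegative weights `λ_1, …, λ_n` summing to one,
`‖∇f(Σ λ_i z_i) − Σ λ_i ∇f(z_i)‖ ≤ (M_f/2) Σ_{i<j} λ_i λ_j ‖z_i − z_j‖²`. -/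
theorem gradient_jensen {d : ℕ} (f : EuclideanSpace ℝ (Fin d) → ℝ) (Mf : ℝ)
    (hf : Differentiable ℝ f) (hf' : Differentiable ℝ (gradient f))
    (hM : ∀ a b : EuclideanSpace ℝ (Fin d),
      ‖fderiv ℝ (gradient f) a - fderiv ℝ (gradient f) b‖ ≤ Mf * ‖a - b‖)
    (n : ℕ) (hn : 1 ≤ n) (z : Fin n → EuclideanSpace ℝ (Fin d)) (lam : Fin n → ℝ)
    (hlam : ∀ i, 0 ≤ lam i) (hsum : ∑ i, lam i = 1) :
    ‖gradient f (∑ i, lam i • z i) - ∑ i, lam i • gradient f (z i)‖ ≤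
      Mf / 2 * ∑ i, ∑ j, (if i < j then lam i * lam j * ‖z i - z j‖ ^ 2 else 0) := by
  set g : EuclideanSpace ℝ (Fin d) → EuclideanSpace ℝ (Fin d) := gradient f with hg
  set zb : EuclideanSpace ℝ (Fin d) := ∑ i, lam i • z i with hzb
  set A := fderiv ℝ g zb with hA
  have htay := taylor_grad g Mf hf' hM
  have hz0 : ∑ i, lam i • (z i - zb) = 0 := by
    calc ∑ i, lam i • (z i - zb) = (∑ i, lam i • z i) - (∑ i, lam i) • zb := by
          simp_rw [smul_sub]
          rw [Finset.sum_sub_distrib, ← Finset.sum_smul]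
      _ = 0 := by rw [hsum, one_smul, ← hzb, sub_self]
  have hA0 : ∑ i, lam i • (A (z i - zb)) = 0 := by
    have h : ∑ i, lam i • A (z i - zb) = A (∑ i, lam i • (z i - zb)) := by
      rw [map_sum]
      exact Finset.sum_congr rfl fun i _ => (A.map_smul _ _).symm
    rw [h, hz0, map_zero]
  have hrw : g zb - ∑ i, lam i • g (z i) =
      ∑ i, lam i • (g zb - g (z i) + A (z i - zb)) := by
    simp_rw [smul_add, smul_sub]
    rw [Finset.sum_add_distrib, Finset.sum_sub_distrib, ← Finset.sum_smul, hsum, one_smul]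
    rw [show ∑ i, lam i • A (z i - zb) = 0 from hA0, add_zero]
  calc ‖g zb - ∑ i, lam i • g (z i)‖
      = ‖∑ i, lam i • (g zb - g (z i) + A (z i - zb))‖ := by rw [hrw]
    _ ≤ ∑ i, ‖lam i • (g zb - g (z i) + A (z i - zb))‖ := norm_sum_le _ _
    _ ≤ ∑ i, lam i * (Mf / 2 * ‖z i - zb‖ ^ 2) := by
        refine Finset.sum_le_sum fun i _ => ?_
        rw [norm_smul, Real.norm_of_nonneg (hlam i)]
        refine mul_le_mul_of_nonneg_left ?_ (hlam i)
        calc ‖g zb - g (z i) + A (z i - zb)‖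
            = ‖g (z i) - g zb - A (z i - zb)‖ := by
              rw [← norm_neg]; congr 1; abel
          _ ≤ Mf / 2 * ‖z i - zb‖ ^ 2 := htay zb (z i)
    _ = Mf / 2 * ∑ i, lam i * ‖z i - zb‖ ^ 2 := by
        rw [Finset.mul_sum]
        exact Finset.sum_congr rfl fun i _ => by ring
    _ = Mf / 2 * ∑ i, ∑ j, (if i < j then lam i * lam j * ‖z i - z j‖ ^ 2 else 0) := by
        rw [hzb, weighted_var z lam hsum]
end

section
/- (Error bound for the trapezoidal rule) Suppose f is twice differentiable with M_f-Lipschitz Hessian. Then for all x, y ∈ ℝ^d, f(x) − f(y) ≤ ½⟨∇f(x) + ∇f(y), x − y⟩ + (M_f/12)‖x − y‖³. -/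
open intervalIntegral

/-- **Error bound for the trapezoidal rule.**
If `f : ℝ^d → ℝ` is twice differentiable and its Hessian (the Fréchet derivative of the
gradient) is `M_f`-Lipschitz in operator norm, then for all `x, y`,
`f x − f y ≤ ½⟨∇f x + ∇f y, x − y⟩ + (M_f/12)‖x − y‖³`. -/
theorem trapezoidal_rule_error {d : ℕ} (f : EuclideanSpace ℝ (Fin d) → ℝ) (Mf : ℝ)
    (hf : Differentiable ℝ f) (hf' : Differentiable ℝ (gradient f))
    (hM : ∀ a b : EuclideanSpace ℝ (Fin d),
      ‖fderiv ℝ (gradient f) a - fderiv ℝ (gradient f) b‖ ≤ Mf * ‖a - b‖)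
    (x y : EuclideanSpace ℝ (Fin d)) :
    f x - f y ≤ (1 / 2) * (inner ℝ (gradient f x + gradient f y) (x - y) : ℝ)
      + Mf / 12 * ‖x - y‖ ^ 3 := by
  set u := x - y with hu
  set γ : ℝ → EuclideanSpace ℝ (Fin d) := fun t => y + t • u with hγ
  set g : ℝ → ℝ := fun t => (inner ℝ (gradient f (γ t)) u : ℝ) with hg
  set q : ℝ → ℝ := fun t => (inner ℝ ((fderiv ℝ (gradient f) (γ t)) u) u : ℝ) with hq
  have hγ1 : γ 1 = x := by simp [hγ, hu]
  have hγ0 : γ 0 = y := by simp [hγ]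
  -- derivative of the path
  have hγd : ∀ t : ℝ, HasDerivAt γ u t := by
    intro t
    have h1 : HasDerivAt (fun t : ℝ => t • u) ((1:ℝ) • u) t :=
      (hasDerivAt_id t).smul_const u
    simpa [hγ] using h1.const_add y
  have hγc : Continuous γ := continuous_const.add (continuous_id.smul continuous_const)
  -- continuity of the Hessian
  have hAc : Continuous (fderiv ℝ (gradient f)) := by
    have hl : LipschitzWith (Real.toNNReal Mf) (fderiv ℝ (gradient f)) := by
      apply LipschitzWith.of_dist_le_mul
      intro a b
      rw [dist_eq_norm, dist_eq_norm]
      calc ‖fderiv ℝ (gradient f) a - fderiv ℝ (gradient f) b‖ ≤ Mf * ‖a - b‖ := hM a b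
        _ ≤ (Real.toNNReal Mf : ℝ) * ‖a - b‖ := by
            gcongr
            exact Real.le_coe_toNNReal Mf
    exact hl.continuous
  have hgc : Continuous g := ((hf'.continuous.comp hγc)).inner continuous_const
  have hqc : Continuous q := ((hAc.comp hγc).clm_apply continuous_const).inner continuous_const
  -- derivative of g is q
  have hGd : ∀ t : ℝ, HasDerivAt (fun s => gradient f (γ s))
      ((fderiv ℝ (gradient f) (γ t)) u) t :=
    fun t => (hf' (γ t)).hasFDerivAt.comp_hasDerivAt t (hγd t)
  have hgd : ∀ t : ℝ, HasDerivAt g (q t) t := by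
    intro t
    have h1 := (hGd t).inner ℝ (hasDerivAt_const t u)
    simpa [hg, hq, real_inner_comm] using h1
  -- derivative of f along the path is g
  have hfd : ∀ t : ℝ, HasDerivAt (fun s => f (γ s)) (g t) t := by
    intro t
    have h1 := (hf (γ t)).hasFDerivAt.comp_hasDerivAt t (hγd t)
    have h2 : fderiv ℝ f (γ t) u = g t := by
      have h3 := ((hf (γ t)).hasGradientAt).hasFDerivAt.fderiv
      rw [h3]
      simp [hg, InnerProductSpace.toDual_apply_apply]
    rwa [h2] at h1
  -- fundamental theorem of calculus
  have hFTC : ∫ t in (0:ℝ)..1, g t = f x - f y := by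
    have h1 := intervalIntegral.integral_eq_sub_of_hasDerivAt
      (f := fun s => f (γ s)) (f' := g) (a := 0) (b := 1)
      (fun t _ => hfd t) (hgc.intervalIntegrable 0 1)
    rw [h1]
    simp only [hγ1, hγ0]
  -- integration by parts
  have hIBP : ∫ t in (0:ℝ)..1, (t - 1/2) * q t
      = ((1:ℝ) - 1/2) * g 1 - ((0:ℝ) - 1/2) * g 0 - ∫ t in (0:ℝ)..1, 1 * g t := by
    exact intervalIntegral.integral_mul_deriv_eq_deriv_mul
      (fun t _ => (hasDerivAt_id t).sub_const (1/2))
      (fun t _ => hgd t)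
      intervalIntegrable_const
      (hqc.intervalIntegrable 0 1)
  have hI1 : ∫ t in (0:ℝ)..1, (t - 1/2) = 0 := by
    have h : ∀ t ∈ Set.uIcc (0:ℝ) 1,
        HasDerivAt (fun s : ℝ => (s - 1/2)^2 / 2) (t - 1/2) t := by
      intro t _
      have h1 := (((hasDerivAt_id t).sub_const (1/2)).pow 2).div_const 2
      simp only [id_eq, Pi.pow_apply] at h1
      refine h1.congr_deriv ?_
      push_cast
      ring
    rw [intervalIntegral.integral_eq_sub_of_hasDerivAt h
      (Continuous.intervalIntegrable (by fun_prop) 0 1)]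
    norm_num
  have hI2 : ∫ t in (0:ℝ)..1, (t - 1/2)^2 = 1/12 := by
    have h : ∀ t ∈ Set.uIcc (0:ℝ) 1,
        HasDerivAt (fun s : ℝ => (s - 1/2)^3 / 3) ((t - 1/2)^2) t := by
      intro t _
      have h1 := (((hasDerivAt_id t).sub_const (1/2)).pow 3).div_const 3
      simp only [id_eq, Pi.pow_apply] at h1
      refine h1.congr_deriv ?_
      push_cast
      ring
    rw [intervalIntegral.integral_eq_sub_of_hasDerivAt h
      (Continuous.intervalIntegrable (by fun_prop) 0 1)]
    norm_num
  -- Lipschitz bound for q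
  have hqlip : ∀ s t : ℝ, |q t - q s| ≤ Mf * ‖u‖^3 * |t - s| := by
    intro s t
    set B := fderiv ℝ (gradient f) (γ t) - fderiv ℝ (gradient f) (γ s) with hB
    have e1 : q t - q s = (inner ℝ (B u) u : ℝ) := by
      simp [hq, hB, ContinuousLinearMap.sub_apply, inner_sub_left]
    have hγdiff : γ t - γ s = (t - s) • u := by
      show (y + t • u) - (y + s • u) = (t - s) • u
      module
    have hBn : ‖B‖ ≤ Mf * (|t - s| * ‖u‖) := by
      have := hM (γ t) (γ s)
      rwa [hγdiff, norm_smul, Real.norm_eq_abs] at this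
    have h1 : |(inner ℝ (B u) u : ℝ)| ≤ ‖B u‖ * ‖u‖ := abs_real_inner_le_norm _ _
    have h2 : ‖B u‖ ≤ ‖B‖ * ‖u‖ := B.le_opNorm u
    rw [e1]
    calc |(inner ℝ (B u) u : ℝ)| ≤ ‖B u‖ * ‖u‖ := h1
      _ ≤ (‖B‖ * ‖u‖) * ‖u‖ := by gcongr
      _ ≤ ((Mf * (|t - s| * ‖u‖)) * ‖u‖) * ‖u‖ := by gcongr
      _ = Mf * ‖u‖^3 * |t - s| := by ring
  -- rewrite the error term
  have key2 : (∫ t in (0:ℝ)..1, (t - 1/2) * (q (1/2) - q t))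
      = - ∫ t in (0:ℝ)..1, (t - 1/2) * q t := by
    have e : (fun t : ℝ => (t - 1/2) * (q (1/2) - q t))
        = fun t : ℝ => q (1/2) * (t - 1/2) - (t - 1/2) * q t := by
      funext t; ring
    rw [e, intervalIntegral.integral_sub
      (Continuous.intervalIntegrable (by fun_prop) 0 1)
      (Continuous.intervalIntegrable (by fun_prop) 0 1),
      intervalIntegral.integral_const_mul, hI1]
    ring
  -- pointwise bound and monotonicity
  have hmono : (∫ t in (0:ℝ)..1, (t - 1/2) * (q (1/2) - q t))
      ≤ ∫ t in (0:ℝ)..1, Mf * ‖u‖^3 * (t - 1/2)^2 := by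
    apply intervalIntegral.integral_mono_on (by norm_num)
      (Continuous.intervalIntegrable (by fun_prop) 0 1)
      (Continuous.intervalIntegrable (by fun_prop) 0 1)
    intro t _
    have h2 : |q (1/2) - q t| ≤ Mf * ‖u‖^3 * |t - 1/2| := by
      rw [abs_sub_comm]; exact hqlip (1/2) t
    calc (t - 1/2) * (q (1/2) - q t) ≤ |(t - 1/2) * (q (1/2) - q t)| := le_abs_self _
      _ = |t - 1/2| * |q (1/2) - q t| := abs_mul _ _
      _ ≤ |t - 1/2| * (Mf * ‖u‖^3 * |t - 1/2|) :=
          mul_le_mul_of_nonneg_left h2 (abs_nonneg _)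
      _ = Mf * ‖u‖^3 * (|t - 1/2| * |t - 1/2|) := by ring
      _ = Mf * ‖u‖^3 * (t - 1/2)^2 := by
          rw [← abs_mul, ← sq, abs_pow, sq_abs]
  have hI3 : ∫ t in (0:ℝ)..1, Mf * ‖u‖^3 * (t - 1/2)^2 = Mf / 12 * ‖u‖^3 := by
    rw [intervalIntegral.integral_const_mul, hI2]
    ring
  -- assemble
  have hone : (∫ t in (0:ℝ)..1, 1 * g t) = ∫ t in (0:ℝ)..1, g t := by
    simp
  have hghalf : (1:ℝ)/2 * g 1 + 1/2 * g 0
      = 1/2 * (inner ℝ (gradient f x + gradient f y) u : ℝ) := by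
    rw [hg]
    simp only [hγ1, hγ0, inner_add_left]
    ring
  have final : f x - f y = ((1:ℝ)/2) * (inner ℝ (gradient f x + gradient f y) u : ℝ)
      + ∫ t in (0:ℝ)..1, (t - 1/2) * (q (1/2) - q t) := by
    rw [key2]
    rw [hone, hFTC] at hIBP
    linarith [hghalf]
  rw [final]
  have := hmono.trans_eq hI3
  linarith
end

section
/- Suppose f is twice differentiable with M_f-Lipschitz Hessian. Then for all x, y ∈ ℝ^d and all t ∈ [0, 1], ‖∇f(t·x + (1−t)·y) − t·∇f(x) − (1−t)·∇f(y)‖ ≤ (M_f/2)·t·(1−t)·‖x − y‖². -/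
open Set

/-- Second-order Taylor bound: if `g` is differentiable with `M`-Lipschitz derivative, then
`‖g a - g b - (Dg b)(a - b)‖ ≤ M/2 * ‖a - b‖²`. -/
theorem taylor_quadratic_bound {E F : Type*} [NormedAddCommGroup E] [NormedSpace ℝ E]
    [NormedAddCommGroup F] [NormedSpace ℝ F] (g : E → F) (M : ℝ)
    (hg : Differentiable ℝ g)
    (hM : ∀ a b : E, ‖fderiv ℝ g a - fderiv ℝ g b‖ ≤ M * ‖a - b‖) (a b : E) :
    ‖g a - g b - fderiv ℝ g b (a - b)‖ ≤ M / 2 * ‖a - b‖ ^ 2 := by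
  set v := a - b with hv
  set h : ℝ → F := fun s => g (b + s • v) - g b - s • (fderiv ℝ g b v) with hh
  set h' : ℝ → F := fun s => fderiv ℝ g (b + s • v) v - fderiv ℝ g b v with hh'
  have hd : ∀ s : ℝ, HasDerivAt h (h' s) s := by
    intro s
    have hline : HasDerivAt (fun s : ℝ => b + s • v) v s := by
      simpa using ((hasDerivAt_id s).smul_const v).const_add b
    have h1 : HasDerivAt (fun s : ℝ => g (b + s • v)) (fderiv ℝ g (b + s • v) v) s :=
      (hg (b + s • v)).hasFDerivAt.comp_hasDerivAt s hline
    have h2 : HasDerivAt (fun s : ℝ => s • (fderiv ℝ g b v)) (fderiv ℝ g b v) s := by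
      simpa using (hasDerivAt_id s).smul_const (fderiv ℝ g b v)
    exact (h1.sub_const (g b)).sub h2
  set B : ℝ → ℝ := fun s => M / 2 * ‖v‖ ^ 2 * s ^ 2 with hB
  have hBd : ∀ s : ℝ, HasDerivAt B (M * ‖v‖ ^ 2 * s) s := by
    intro s
    have := (hasDerivAt_pow 2 s).const_mul (M / 2 * ‖v‖ ^ 2)
    refine this.congr_deriv ?_
    ring
  have bound : ∀ s ∈ Ico (0:ℝ) 1, ‖h' s‖ ≤ M * ‖v‖ ^ 2 * s := by
    intro s hs
    calc ‖h' s‖ = ‖(fderiv ℝ g (b + s • v) - fderiv ℝ g b) v‖ := by simp [hh']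
      _ ≤ ‖fderiv ℝ g (b + s • v) - fderiv ℝ g b‖ * ‖v‖ :=
          (fderiv ℝ g (b + s • v) - fderiv ℝ g b).le_opNorm v
      _ ≤ M * ‖b + s • v - b‖ * ‖v‖ :=
          mul_le_mul_of_nonneg_right (hM _ _) (norm_nonneg v)
      _ = M * ‖v‖ ^ 2 * s := by
          rw [add_sub_cancel_left, norm_smul, Real.norm_eq_abs, abs_of_nonneg hs.1]
          ring
  have key := image_norm_le_of_norm_deriv_right_le_deriv_boundary
    (f := h) (f' := h') (a := 0) (b := 1)
    (fun s _ => (hd s).continuousAt.continuousWithinAt)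
    (fun s _ => (hd s).hasDerivWithinAt)
    (by simp [hh, hB]) hBd (fun s hs => bound s hs)
    (right_mem_Icc.2 zero_le_one)
  simpa [hh, hB, hv] using key

/-- If `f : ℝ^d → ℝ` is twice differentiable with `M_f`-Lipschitz Hessian, then for all
`x, y` and `t ∈ [0,1]`,
`‖∇f(t·x + (1−t)·y) − t·∇f(x) − (1−t)·∇f(y)‖ ≤ (M_f/2)·t·(1−t)·‖x − y‖²`. -/
theorem gradient_convex_combination_error {d : ℕ} (f : EuclideanSpace ℝ (Fin d) → ℝ) (Mf : ℝ)
    (hf : Differentiable ℝ f) (hf' : Differentiable ℝ (gradient f))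
    (hM : ∀ a b : EuclideanSpace ℝ (Fin d),
      ‖fderiv ℝ (gradient f) a - fderiv ℝ (gradient f) b‖ ≤ Mf * ‖a - b‖)
    (x y : EuclideanSpace ℝ (Fin d)) (t : ℝ) (ht : t ∈ Set.Icc (0 : ℝ) 1) :
    ‖gradient f (t • x + (1 - t) • y) - t • gradient f x - (1 - t) • gradient f y‖ ≤
      Mf / 2 * t * (1 - t) * ‖x - y‖ ^ 2 := by
  obtain ⟨h0, h1⟩ := ht
  have h1' : (0:ℝ) ≤ 1 - t := by linarith
  set g := gradient f with hg
  set z := t • x + (1 - t) • y with hz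
  set D := fderiv ℝ g z with hD
  have hxz : x - z = (1 - t) • (x - y) := by rw [hz]; module
  have hyz : y - z = (-t) • (x - y) := by rw [hz]; module
  have nxz : ‖x - z‖ = (1 - t) * ‖x - y‖ := by
    rw [hxz, norm_smul, Real.norm_eq_abs, abs_of_nonneg h1']
  have nyz : ‖y - z‖ = t * ‖x - y‖ := by
    rw [hyz, norm_smul, Real.norm_eq_abs, abs_neg, abs_of_nonneg h0]
  have T1 := taylor_quadratic_bound g Mf hf' hM x z
  have T2 := taylor_quadratic_bound g Mf hf' hM y z
  have hsum : t • (D (x - z)) + (1 - t) • (D (y - z)) = 0 := by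
    rw [← map_smul, ← map_smul, ← map_add]
    have : t • (x - z) + (1 - t) • (y - z) = 0 := by rw [hz]; module
    rw [this, map_zero]
  have hid : g z - t • g x - (1 - t) • g y
      = -(t • (g x - g z - D (x - z))) - (1 - t) • (g y - g z - D (y - z)) := by
    have expand : -(t • (g x - g z - D (x - z))) - (1 - t) • (g y - g z - D (y - z))
        = (t + (1 - t)) • g z - t • g x - (1 - t) • g y
          + (t • (D (x - z)) + (1 - t) • (D (y - z))) := by module
    rw [expand, hsum, add_zero]
    module
  calc ‖g z - t • g x - (1 - t) • g y‖
      = ‖-(t • (g x - g z - D (x - z))) - (1 - t) • (g y - g z - D (y - z))‖ := by rw [hid]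
    _ ≤ ‖t • (g x - g z - D (x - z))‖ + ‖(1 - t) • (g y - g z - D (y - z))‖ := by
        refine (norm_sub_le _ _).trans ?_
        rw [norm_neg]
    _ = t * ‖g x - g z - D (x - z)‖ + (1 - t) * ‖g y - g z - D (y - z)‖ := by
        rw [norm_smul, norm_smul, Real.norm_eq_abs, Real.norm_eq_abs,
          abs_of_nonneg h0, abs_of_nonneg h1']
    _ ≤ t * (Mf / 2 * ‖x - z‖ ^ 2) + (1 - t) * (Mf / 2 * ‖y - z‖ ^ 2) := by
        exact add_le_add (mul_le_mul_of_nonneg_left T1 h0) (mul_le_mul_of_nonneg_left T2 h1')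
    _ = Mf / 2 * t * (1 - t) * ‖x - y‖ ^ 2 := by rw [nxz, nyz]; ring
end

section
/- Suppose f is twice differentiable with M_f-Lipschitz Hessian. Let x, x′ ∈ ℝ^d, θ ∈ [0, 1], and y := x + θ(x − x′). Then ‖∇f(y) + θ∇f(x′) − (1 + θ)∇f(x)‖ ≤ θ·M_f·‖x − x′‖². -/
/-- If `f : ℝ^d → ℝ` is twice differentiable with `M_f`-Lipschitz Hessian, `θ ∈ [0,1]`
and `y = x + θ(x − x′)`, then `‖∇f(y) + θ∇f(x′) − (1+θ)∇f(x)‖ ≤ θ·M_f·‖x − x′‖²`. -/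
theorem gradient_extrapolation_error {d : ℕ} (f : EuclideanSpace ℝ (Fin d) → ℝ) (Mf : ℝ)
    (hf : Differentiable ℝ f) (hf' : Differentiable ℝ (gradient f))
    (hM : ∀ a b : EuclideanSpace ℝ (Fin d),
      ‖fderiv ℝ (gradient f) a - fderiv ℝ (gradient f) b‖ ≤ Mf * ‖a - b‖)
    (x x' : EuclideanSpace ℝ (Fin d)) (θ : ℝ) (hθ : θ ∈ Set.Icc (0 : ℝ) 1)
    (y : EuclideanSpace ℝ (Fin d)) (hy : y = x + θ • (x - x')) :
    ‖gradient f y + θ • gradient f x' - (1 + θ) • gradient f x‖ ≤ θ * Mf * ‖x - x'‖ ^ 2 := by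
  obtain ⟨hθ0, hθ1⟩ := hθ
  set g := gradient f with hg
  set u : EuclideanSpace ℝ (Fin d) := x - x' with hu
  by_cases hu0 : u = 0
  · have hx : x = x' := sub_eq_zero.mp hu0
    have hyx : y = x := by rw [hy, hu0, smul_zero, add_zero]
    rw [hyx, ← hx, hu0, norm_zero]
    have h0 : g x + θ • g x - (1 + θ) • g x = 0 := by module
    rw [h0, norm_zero]
    norm_num
  · have hun : (0:ℝ) < ‖u‖ := norm_pos_iff.mpr hu0
    have hMf : 0 ≤ Mf := by
      have h1 : (0:ℝ) ≤ Mf * ‖u‖ := le_trans (norm_nonneg _) (hM x x')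
      exact nonneg_of_mul_nonneg_right (by linarith [h1] : (0:ℝ) ≤ ‖u‖ * Mf) hun
    -- the auxiliary curve
    set ψ : ℝ → EuclideanSpace ℝ (Fin d) :=
      fun t => g (x + (t * θ) • u) - θ • g (x' + t • u) with hψ
    have hderiv : ∀ t : ℝ, HasDerivAt ψ
        (θ • ((fderiv ℝ g (x + (t * θ) • u) - fderiv ℝ g (x' + t • u)) u)) t := by
      intro t
      have h1 : HasDerivAt (fun t : ℝ => x + (t * θ) • u) (θ • u) t := by
        have := (((hasDerivAt_id t).mul_const θ).smul_const u).const_add x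
        simpa using this
      have h2 : HasDerivAt (fun t : ℝ => x' + t • u) u t := by
        have := ((hasDerivAt_id t).smul_const u).const_add x'
        simpa using this
      have hg1 : HasDerivAt (fun t : ℝ => g (x + (t * θ) • u))
          (fderiv ℝ g (x + (t * θ) • u) (θ • u)) t :=
        (hf' _).hasFDerivAt.comp_hasDerivAt t h1
      have hg2 : HasDerivAt (fun t : ℝ => θ • g (x' + t • u))
          (θ • fderiv ℝ g (x' + t • u) u) t :=
        ((hf' _).hasFDerivAt.comp_hasDerivAt t h2).const_smul θ
      have := hg1.sub hg2
      have heq : θ • ((fderiv ℝ g (x + (t * θ) • u) - fderiv ℝ g (x' + t • u)) u) =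
          fderiv ℝ g (x + (t * θ) • u) (θ • u) - θ • fderiv ℝ g (x' + t • u) u := by
        rw [map_smul]
        simp [smul_sub]
      rw [heq]
      exact this
    have hbound : ∀ t ∈ Set.Ico (0:ℝ) 1,
        ‖θ • ((fderiv ℝ g (x + (t * θ) • u) - fderiv ℝ g (x' + t • u)) u)‖
          ≤ θ * Mf * ‖u‖ ^ 2 := by
      intro t ht
      obtain ⟨ht0, ht1⟩ := ht
      have hdiff : (x + (t * θ) • u) - (x' + t • u) = (1 + t * θ - t) • u := by
        have : x = x' + u := by rw [hu]; abel
        rw [this]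
        module
      have hc0 : (0:ℝ) ≤ 1 + t * θ - t := by nlinarith
      have hc1 : 1 + t * θ - t ≤ 1 := by nlinarith
      have hnd : ‖(x + (t * θ) • u) - (x' + t • u)‖ ≤ ‖u‖ := by
        rw [hdiff, norm_smul, Real.norm_eq_abs, abs_of_nonneg hc0]
        nlinarith [hun.le]
      calc ‖θ • ((fderiv ℝ g (x + (t * θ) • u) - fderiv ℝ g (x' + t • u)) u)‖
          = θ * ‖(fderiv ℝ g (x + (t * θ) • u) - fderiv ℝ g (x' + t • u)) u‖ := by
            rw [norm_smul, Real.norm_eq_abs, abs_of_nonneg hθ0]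
        _ ≤ θ * (‖fderiv ℝ g (x + (t * θ) • u) - fderiv ℝ g (x' + t • u)‖ * ‖u‖) := by
            gcongr
            exact ContinuousLinearMap.le_opNorm _ _
        _ ≤ θ * ((Mf * ‖(x + (t * θ) • u) - (x' + t • u)‖) * ‖u‖) := by
            gcongr
            exact hM _ _
        _ ≤ θ * ((Mf * ‖u‖) * ‖u‖) := by gcongr
        _ = θ * Mf * ‖u‖ ^ 2 := by ring
    have hmvt : ‖ψ 1 - ψ 0‖ ≤ θ * Mf * ‖u‖ ^ 2 :=
      norm_image_sub_le_of_norm_deriv_le_segment_01'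
        (fun t ht => (hderiv t).hasDerivWithinAt) hbound
    have hψ1 : ψ 1 = g y - θ • g x := by
      have hx'u : x' + u = x := by rw [hu]; abel
      simp only [hψ, one_mul, one_smul, hx'u, hy, hu, add_sub_cancel]
    have hψ0 : ψ 0 = g x - θ • g x' := by
      simp [hψ]
    have heq : g y + θ • g x' - (1 + θ) • g x = ψ 1 - ψ 0 := by
      rw [hψ1, hψ0, add_smul, one_smul]
      abel
    rw [heq]
    exact hmvt
end

section
/- Suppose f is twice differentiable with M_f-Lipschitz Hessian. Let L > 0, let θ_1, θ_2, … ∈ [0, 1], and let sequences (x_k) and (y_k) in ℝ^d be defined by x_{−1} = x_0 = y_0 and, for k ≥ 1, x_k = y_{k−1} − (1/L)∇f(y_{k−1}) and y_k = x_k + θ_k(x_k − x_{k−1}). Define the weights p_{k,i} := (Π_{j=i+1}^{k−1} θ_j)/Z_k with Z_k := Σ_{i=0}^{k−1} Π_{j=i+1}^{k−1} θ_j, the averaged point ȳ_k := Σ_{i=0}^{k−1} p_{k,i} y_i, and S_k := Σ_{i=1}^k ‖x_i − x_{i−1}‖². Then for all k ≥ 1, ‖∇f(ȳ_k)‖ ≤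 (L/Z_k)‖x_k − x_{k−1}‖ + ((k−1)(k+5)²/(16 Z_k²))·M_f·S_k. -/
noncomputable section

/-- The normalization constant `Z_k = Σ_{i=0}^{k−1} Π_{j=i+1}^{k−1} θ_j`. -/
def Zk (θ : ℕ → ℝ) (k : ℕ) : ℝ :=
  ∑ i ∈ Finset.range k, ∏ j ∈ Finset.Ico (i + 1) k, θ j

/-- The averaging weight `p_{k,i} = (Π_{j=i+1}^{k−1} θ_j) / Z_k`. -/
def pki (θ : ℕ → ℝ) (k i : ℕ) : ℝ :=
  (∏ j ∈ Finset.Ico (i + 1) k, θ j) / Zk θ k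

open Finset RealInnerProductSpace

section AuxiliaryLemmas

lemma sum_range_cast' (n : ℕ) : ∑ i ∈ range n, (i : ℝ) = n * (n - 1) / 2 := by
  induction n with
  | zero => simp
  | succ m ih =>
    rw [Finset.sum_range_succ, ih]
    push_cast
    ring

lemma taylor_bound' {d : ℕ} (f : EuclideanSpace ℝ (Fin d) → ℝ) (Mf : ℝ)
    (hf' : Differentiable ℝ (gradient f))
    (hM : ∀ a b : EuclideanSpace ℝ (Fin d),
      ‖fderiv ℝ (gradient f) a - fderiv ℝ (gradient f) b‖ ≤ Mf * ‖a - b‖)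
    (a b : EuclideanSpace ℝ (Fin d)) :
    ‖gradient f b - gradient f a - fderiv ℝ (gradient f) a (b - a)‖ ≤
      Mf / 2 * ‖b - a‖ ^ 2 := by
  set g := gradient f
  set H := fderiv ℝ g with hH
  set v := b - a with hv
  set φ : ℝ → EuclideanSpace ℝ (Fin d) := fun t => g (a + t • v) - t • (H a v) with hφ
  set φ' : ℝ → EuclideanSpace ℝ (Fin d) := fun t => H (a + t • v) v - H a v with hφ'
  have hHcont : Continuous H := by
    have : LipschitzWith (Real.toNNReal Mf) H := by
      apply LipschitzWith.of_dist_le_mul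
      intro p q
      rw [dist_eq_norm, dist_eq_norm]
      calc ‖H p - H q‖ ≤ Mf * ‖p - q‖ := hM p q
        _ ≤ Real.toNNReal Mf * ‖p - q‖ := by
            apply mul_le_mul_of_nonneg_right _ (norm_nonneg _)
            exact le_max_left _ _
    exact this.continuous
  have hderiv : ∀ t : ℝ, HasDerivAt φ (φ' t) t := by
    intro t
    have h1 : HasDerivAt (fun s : ℝ => a + s • v) v t := by
      simpa using ((hasDerivAt_id t).smul_const v).const_add a
    have h2 : HasFDerivAt g (H (a + t • v)) (a + t • v) := (hf' _).hasFDerivAt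
    have h3 : HasDerivAt (fun s : ℝ => g (a + s • v)) (H (a + t • v) v) t :=
      by have h := h2.comp_hasDerivAt t h1; exact h
    have h4 : HasDerivAt (fun s : ℝ => s • (H a v)) (H a v) t := by
      simpa using (hasDerivAt_id t).smul_const (H a v)
    exact h3.sub h4
  have hφ'cont : Continuous φ' := by
    apply Continuous.sub
    · exact (hHcont.comp (continuous_const.add (continuous_id.smul continuous_const))).clm_apply
        continuous_const
    · exact continuous_const
  have hInt : IntervalIntegrable φ' MeasureTheory.volume 0 1 :=
    hφ'cont.intervalIntegrable 0 1
  have hFTC : ∫ t in (0:ℝ)..1, φ' t = φ 1 - φ 0 :=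
    intervalIntegral.integral_eq_sub_of_hasDerivAt (fun t _ => hderiv t) hInt
  have hab : a + (1:ℝ) • v = b := by rw [one_smul, hv]; abel
  have hval : φ 1 - φ 0 = g b - g a - H a v := by
    have h0 : φ 0 = g a := by simp [hφ]
    have h1 : φ 1 = g b - H a v := by
      rw [hφ]; simp only [one_smul]
      rw [show a + v = b by rw [hv]; abel]
    rw [h0, h1]; abel
  have hbound : ∀ t ∈ Set.Icc (0:ℝ) 1, ‖φ' t‖ ≤ (Mf * ‖v‖ ^ 2) * t := by
    intro t ht
    have : ‖φ' t‖ ≤ ‖H (a + t • v) - H a‖ * ‖v‖ := by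
      have h5 := (H (a + t • v) - H a).le_opNorm v
      rw [ContinuousLinearMap.sub_apply] at h5
      exact h5
    calc ‖φ' t‖ ≤ ‖H (a + t • v) - H a‖ * ‖v‖ := this
      _ ≤ (Mf * ‖a + t • v - a‖) * ‖v‖ :=
          mul_le_mul_of_nonneg_right (hM _ _) (norm_nonneg _)
      _ = (Mf * ‖v‖ ^ 2) * t := by
          rw [show a + t • v - a = t • v by abel, norm_smul]
          simp [Real.norm_eq_abs, abs_of_nonneg ht.1]
          ring
  have hnorm : ‖∫ t in (0:ℝ)..1, φ' t‖ ≤ Mf / 2 * ‖v‖ ^ 2 := by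
    calc ‖∫ t in (0:ℝ)..1, φ' t‖ ≤ ∫ t in (0:ℝ)..1, ‖φ' t‖ :=
        intervalIntegral.norm_integral_le_integral_norm zero_le_one
      _ ≤ ∫ t in (0:ℝ)..1, (Mf * ‖v‖ ^ 2) * t := by
          apply intervalIntegral.integral_mono_on zero_le_one
          · exact (hφ'cont.norm).intervalIntegrable 0 1
          · exact (continuous_const.mul continuous_id).intervalIntegrable 0 1
          · exact hbound
      _ = Mf / 2 * ‖v‖ ^ 2 := by
          rw [intervalIntegral.integral_const_mul, integral_id]
          ring
  rw [hFTC, hval] at hnorm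
  exact hnorm

lemma var_ident' {E : Type*} [NormedAddCommGroup E] [InnerProductSpace ℝ E]
    (s : Finset ℕ) (w : ℕ → ℝ) (v : ℕ → E) (hw : ∑ i ∈ s, w i = 1) :
    ∑ i ∈ s, w i * ‖v i - ∑ j ∈ s, w j • v j‖ ^ 2 =
      (1/2) * ∑ i ∈ s, ∑ j ∈ s, w i * w j * ‖v i - v j‖ ^ 2 := by
  set c : E := ∑ j ∈ s, w j • v j with hc
  have key : ∀ i ∈ s, (w i : ℝ) * ⟪v i, c⟫ = ⟪w i • v i, c⟫ := by
    intro i _; rw [real_inner_smul_left]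
  have hsum_inner : ∑ i ∈ s, w i * ⟪v i, c⟫ = ‖c‖ ^ 2 := by
    rw [Finset.sum_congr rfl key, ← sum_inner, ← hc, real_inner_self_eq_norm_sq]
  have lhs_eq : ∑ i ∈ s, w i * ‖v i - c‖ ^ 2
      = (∑ i ∈ s, w i * ‖v i‖ ^ 2) - ‖c‖ ^ 2 := by
    have : ∀ i ∈ s, w i * ‖v i - c‖ ^ 2
        = w i * ‖v i‖ ^ 2 - 2 * (w i * ⟪v i, c⟫) + w i * ‖c‖ ^ 2 := by
      intro i _; rw [norm_sub_sq_real]; ring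
    rw [Finset.sum_congr rfl this, Finset.sum_add_distrib, Finset.sum_sub_distrib,
      ← Finset.mul_sum, hsum_inner, ← Finset.sum_mul, hw]
    ring
  have rhs_eq : ∑ i ∈ s, ∑ j ∈ s, w i * w j * ‖v i - v j‖ ^ 2
      = 2 * ((∑ i ∈ s, w i * ‖v i‖ ^ 2) - ‖c‖ ^ 2) := by
    have inner_expand : ∀ i ∈ s, ∑ j ∈ s, w i * w j * ⟪v i, v j⟫
        = w i * ⟪v i, c⟫ := by
      intro i _
      rw [hc, inner_sum, Finset.mul_sum]
      apply Finset.sum_congr rfl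
      intro j _
      rw [real_inner_smul_right]; ring
    have hexp : ∀ i ∈ s, ∑ j ∈ s, w i * w j * ‖v i - v j‖ ^ 2
        = (w i * ‖v i‖ ^ 2) * (∑ j ∈ s, w j) + w i * (∑ j ∈ s, w j * ‖v j‖ ^ 2)
          - 2 * (w i * ⟪v i, c⟫) := by
      intro i hi
      have : ∀ j ∈ s, w i * w j * ‖v i - v j‖ ^ 2
          = (w i * ‖v i‖ ^ 2) * w j + w i * (w j * ‖v j‖ ^ 2)
            - 2 * (w i * w j * ⟪v i, v j⟫) := by
        intro j _; rw [norm_sub_sq_real]; ring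
      rw [Finset.sum_congr rfl this, Finset.sum_sub_distrib, Finset.sum_add_distrib,
        ← Finset.mul_sum, ← Finset.mul_sum, ← Finset.mul_sum, inner_expand i hi]
    rw [Finset.sum_congr rfl hexp, Finset.sum_sub_distrib, Finset.sum_add_distrib,
      hw]
    simp only [mul_one]
    rw [← Finset.sum_mul, hw, one_mul, ← Finset.mul_sum, hsum_inner]
    ring
  rw [lhs_eq, rhs_eq]; ring

lemma sum1_le' (k m : ℕ) (hk : 1 ≤ k) (hmk : m < k) :
    ∑ i ∈ range k, ∑ j ∈ range k,
      (if i ≤ m ∧ m ≤ j ∧ i ≠ j then ((j : ℝ) - i + 4) else 0)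
      ≤ ((k : ℝ) - 1) * ((k : ℝ) + 5) ^ 2 / 8 := by
  have hfilter1 : (range k).filter (fun i => i ≤ m) = range (m + 1) := by
    ext a; simp only [Finset.mem_filter, Finset.mem_range]; omega
  have hfilter2 : (range k).filter (fun j => m ≤ j) = Icc m (k - 1) := by
    ext a; simp only [Finset.mem_filter, Finset.mem_range, Finset.mem_Icc]; omega
  have split : ∀ i j : ℕ,
      (if i ≤ m ∧ m ≤ j ∧ i ≠ j then ((j : ℝ) - i + 4) else 0)
      = (if i ≤ m ∧ m ≤ j then ((j : ℝ) - i + 4) else 0)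
        - (if i = m ∧ j = m then ((j : ℝ) - i + 4) else 0) := by
    intro i j
    by_cases h1 : i ≤ m ∧ m ≤ j ∧ i ≠ j
    · rw [if_pos h1, if_pos ⟨h1.1, h1.2.1⟩, if_neg (by omega)]; ring
    · by_cases h2 : i = m ∧ j = m
      · rw [if_neg h1, if_pos ⟨le_of_eq h2.1, le_of_eq h2.2.symm⟩, if_pos h2]; ring
      · rw [if_neg h1, if_neg (by omega), if_neg h2]; ring
  have diag : ∑ i ∈ range k, ∑ j ∈ range k,
      (if i = m ∧ j = m then ((j : ℝ) - i + 4) else 0) = 4 := by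
    have inner : ∀ i ∈ range k, ∑ j ∈ range k,
        (if i = m ∧ j = m then ((j : ℝ) - i + 4) else 0)
        = (if i = m then ((m : ℝ) - i + 4) else 0) := by
      intro i _
      by_cases h : i = m
      · subst h
        rw [if_pos rfl]
        have : ∀ j : ℕ, (if i = i ∧ j = i then ((j : ℝ) - i + 4) else 0)
            = (if j = i then ((j : ℝ) - i + 4) else 0) := by
          intro j; by_cases hj : j = i <;> simp [hj]
        rw [Finset.sum_congr rfl (fun j _ => this j), Finset.sum_ite_eq' (range k) i]
        rw [if_pos (Finset.mem_range.mpr hmk)]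
      · rw [if_neg h]
        apply Finset.sum_eq_zero
        intro j _
        rw [if_neg (by tauto)]
    rw [Finset.sum_congr rfl inner, Finset.sum_ite_eq' (range k) m]
    rw [if_pos (Finset.mem_range.mpr hmk)]
    simp
  have rect : ∑ i ∈ range k, ∑ j ∈ range k,
      (if i ≤ m ∧ m ≤ j then ((j : ℝ) - i + 4) else 0)
      = ((m:ℝ) + 1) * (((k:ℝ) * (k - 1) / 2 - (m:ℝ) * (m - 1) / 2) + 4 * ((k:ℝ) - m))
        - ((k:ℝ) - m) * ((m:ℝ) * (m + 1) / 2) := by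
    have hsdiff : Icc m (k - 1) = range k \ range m := by
      ext a; simp only [Finset.mem_Icc, Finset.mem_sdiff, Finset.mem_range]; omega
    have hcard : ((Icc m (k-1)).card : ℝ) = (k:ℝ) - m := by
      rw [Nat.card_Icc]
      have : k - 1 + 1 - m = k - m := by omega
      rw [this, Nat.cast_sub hmk.le]
    have hJ : ∑ j ∈ Icc m (k - 1), (j : ℝ)
        = (k:ℝ) * (k - 1) / 2 - (m:ℝ) * (m - 1) / 2 := by
      rw [hsdiff, Finset.sum_sdiff_eq_sub (Finset.range_subset_range.mpr hmk.le),
        sum_range_cast', sum_range_cast']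
    have inner : ∀ i : ℕ, ∑ j ∈ range k, (if i ≤ m ∧ m ≤ j then ((j : ℝ) - i + 4) else 0)
        = if i ≤ m then (∑ j ∈ Icc m (k-1), ((j : ℝ) - i + 4)) else 0 := by
      intro i
      by_cases h : i ≤ m
      · rw [if_pos h]
        have : ∀ j : ℕ, (if i ≤ m ∧ m ≤ j then ((j : ℝ) - i + 4) else 0)
            = (if m ≤ j then ((j : ℝ) - i + 4) else 0) := by
          intro j; by_cases hj : m ≤ j <;> simp [hj, h]
        rw [Finset.sum_congr rfl (fun j _ => this j), ← Finset.sum_filter, hfilter2]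
      · rw [if_neg h]
        apply Finset.sum_eq_zero
        intro j _
        rw [if_neg (by tauto)]
    rw [Finset.sum_congr rfl (fun i _ => inner i), ← Finset.sum_filter, hfilter1]
    have hBi : ∀ i : ℕ, ∑ j ∈ Icc m (k-1), ((j : ℝ) - i + 4)
        = ((k:ℝ) * (k - 1) / 2 - (m:ℝ) * (m - 1) / 2) + ((k:ℝ) - m) * (4 - (i:ℝ)) := by
      intro i
      have : ∀ j ∈ Icc m (k-1), ((j : ℝ) - i + 4) = (j:ℝ) + (4 - (i:ℝ)) := by
        intro j _; ring
      rw [Finset.sum_congr rfl this, Finset.sum_add_distrib, hJ, Finset.sum_const,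
        nsmul_eq_mul, hcard]
    rw [Finset.sum_congr rfl (fun i _ => hBi i), Finset.sum_add_distrib,
      Finset.sum_const, Finset.card_range, nsmul_eq_mul]
    have : ∑ i ∈ range (m+1), ((k:ℝ) - m) * (4 - (i:ℝ))
        = ((k:ℝ) - m) * (4 * ((m:ℝ)+1) - (m:ℝ)*(m+1)/2) := by
      rw [← Finset.mul_sum]
      congr 1
      rw [Finset.sum_sub_distrib, Finset.sum_const, Finset.card_range, nsmul_eq_mul,
        sum_range_cast']
      push_cast
      ring
    rw [this]
    push_cast
    ring
  rw [Finset.sum_congr rfl (fun i _ => Finset.sum_congr rfl (fun j _ => split i j))]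
  rw [Finset.sum_congr rfl (fun i _ => Finset.sum_sub_distrib _ _), Finset.sum_sub_distrib]
  rw [diag, rect]
  have hm0 : (0:ℝ) ≤ (m:ℝ) := Nat.cast_nonneg m
  have hmK : (m:ℝ) ≤ (k:ℝ) - 1 := by
    have : (m:ℝ) + 1 ≤ (k:ℝ) := by exact_mod_cast hmk
    linarith
  have hK1 : (1:ℝ) ≤ (k:ℝ) := by exact_mod_cast hk
  nlinarith [mul_nonneg (sq_nonneg ((k:ℝ) - 2*(m:ℝ) - 1)) (by linarith : (0:ℝ) ≤ (k:ℝ) + 7)]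

lemma count_le' (k m : ℕ) (hk : 1 ≤ k) (q : ℕ → ℝ) (hq0 : ∀ i, 0 ≤ q i)
    (hq1 : ∀ i, q i ≤ 1) :
    ∑ i ∈ range k, ∑ j ∈ range k,
      (if min i j ≤ m ∧ m ≤ max i j ∧ i ≠ j then
        q i * q j * (((max i j - min i j : ℕ) : ℝ) + 4) else 0)
      ≤ ((k : ℝ) - 1) * ((k : ℝ) + 5) ^ 2 / 4 := by
  have hK1 : (1:ℝ) ≤ (k:ℝ) := by exact_mod_cast hk
  have hRHS0 : (0:ℝ) ≤ ((k : ℝ) - 1) * ((k : ℝ) + 5) ^ 2 / 4 := by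
    apply div_nonneg _ (by norm_num)
    apply mul_nonneg (by linarith) (sq_nonneg _)
  by_cases hmk : k ≤ m
  · have : ∀ i ∈ range k, ∀ j ∈ range k,
        (if min i j ≤ m ∧ m ≤ max i j ∧ i ≠ j then
          q i * q j * (((max i j - min i j : ℕ) : ℝ) + 4) else 0) = 0 := by
      intro i hi j hj
      rw [Finset.mem_range] at hi hj
      rw [if_neg]
      rintro ⟨-, h2, -⟩
      rcases le_total i j with h | h
      · rw [max_eq_right h] at h2; omega
      · rw [max_eq_left h] at h2; omega
    calc _ = (0:ℝ) := by
          apply Finset.sum_eq_zero; intro i hi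
          apply Finset.sum_eq_zero; intro j hj
          exact this i hi j hj
      _ ≤ _ := hRHS0
  push_neg at hmk
  have key : ∀ i ∈ range k, ∀ j ∈ range k,
      (if min i j ≤ m ∧ m ≤ max i j ∧ i ≠ j then
        q i * q j * (((max i j - min i j : ℕ) : ℝ) + 4) else 0)
      ≤ (if i ≤ m ∧ m ≤ j ∧ i ≠ j then ((j : ℝ) - i + 4) else 0)
        + (if j ≤ m ∧ m ≤ i ∧ j ≠ i then ((i : ℝ) - j + 4) else 0) := by
    intro i _ j _
    have hqq : q i * q j ≤ 1 := by
      calc q i * q j ≤ 1 * 1 := mul_le_mul (hq1 i) (hq1 j) (hq0 j) (by norm_num)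
        _ = 1 := by norm_num
    have hqq0 : 0 ≤ q i * q j := mul_nonneg (hq0 i) (hq0 j)
    rcases lt_trichotomy i j with h | h | h
    · have hmin : min i j = i := min_eq_left h.le
      have hmax : max i j = j := max_eq_right h.le
      have hc : ((j - i : ℕ) : ℝ) = (j : ℝ) - i := by
        rw [Nat.cast_sub h.le]
      have hc0 : (0:ℝ) ≤ (j : ℝ) - i + 4 := by
        have : (i:ℝ) ≤ j := by exact_mod_cast h.le
        linarith
      rw [hmin, hmax, hc]
      by_cases hcond : i ≤ m ∧ m ≤ j ∧ i ≠ j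
      · rw [if_pos hcond, if_pos hcond, if_neg (by omega)]
        nlinarith
      · rw [if_neg hcond, if_neg hcond, if_neg (by omega)]
        norm_num
    · subst h
      simp
    · have hmin : min i j = j := min_eq_right h.le
      have hmax : max i j = i := max_eq_left h.le
      have hc : ((i - j : ℕ) : ℝ) = (i : ℝ) - j := by
        rw [Nat.cast_sub h.le]
      have hc0 : (0:ℝ) ≤ (i : ℝ) - j + 4 := by
        have : (j:ℝ) ≤ i := by exact_mod_cast h.le
        linarith
      rw [hmin, hmax, hc]
      by_cases hcond : j ≤ m ∧ m ≤ i ∧ j ≠ i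
      · rw [if_pos (by omega), if_pos hcond, if_neg (by omega)]
        nlinarith
      · rw [if_neg (by omega), if_neg hcond, if_neg (by omega)]
        norm_num
  have step1 : ∑ i ∈ range k, ∑ j ∈ range k,
      (if min i j ≤ m ∧ m ≤ max i j ∧ i ≠ j then
        q i * q j * (((max i j - min i j : ℕ) : ℝ) + 4) else 0)
      ≤ (∑ i ∈ range k, ∑ j ∈ range k,
          (if i ≤ m ∧ m ≤ j ∧ i ≠ j then ((j : ℝ) - i + 4) else 0))
        + (∑ i ∈ range k, ∑ j ∈ range k,
          (if j ≤ m ∧ m ≤ i ∧ j ≠ i then ((i : ℝ) - j + 4) else 0)) := by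
    rw [← Finset.sum_add_distrib]
    apply Finset.sum_le_sum
    intro i hi
    rw [← Finset.sum_add_distrib]
    apply Finset.sum_le_sum
    intro j hj
    exact key i hi j hj
  have swap : ∑ i ∈ range k, ∑ j ∈ range k,
      (if j ≤ m ∧ m ≤ i ∧ j ≠ i then ((i : ℝ) - j + 4) else 0)
      = ∑ i ∈ range k, ∑ j ∈ range k,
      (if i ≤ m ∧ m ≤ j ∧ i ≠ j then ((j : ℝ) - i + 4) else 0) := by
    rw [Finset.sum_comm]
  calc _ ≤ _ := step1
    _ = 2 * (∑ i ∈ range k, ∑ j ∈ range k,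
        (if i ≤ m ∧ m ≤ j ∧ i ≠ j then ((j : ℝ) - i + 4) else 0)) := by
        rw [swap]; ring
    _ ≤ 2 * (((k : ℝ) - 1) * ((k : ℝ) + 5) ^ 2 / 8) := by
        linarith [sum1_le' k m hk hmk]
    _ = ((k : ℝ) - 1) * ((k : ℝ) + 5) ^ 2 / 4 := by ring

variable {d : ℕ}

lemma telesc' (x : ℕ → EuclideanSpace ℝ (Fin d)) :
    ∀ i j : ℕ, i ≤ j → x j - x i = ∑ m ∈ Icc (i+1) j, (x m - x (m-1)) := by
  intro i j
  induction j with
  | zero =>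
    intro h
    have : i = 0 := Nat.le_zero.mp h
    subst this
    simp
  | succ n ih =>
    intro h
    rcases Nat.lt_or_ge i (n+1) with h' | h'
    · have hin : i ≤ n := by omega
      rw [Finset.sum_Icc_succ_top (by omega : i + 1 ≤ n + 1), ← ih hin]
      simp only [Nat.add_sub_cancel]
      abel
    · have : i = n + 1 := by omega
      subst this
      simp

lemma gradsum_telesc' (θ : ℕ → ℝ) (x y : ℕ → EuclideanSpace ℝ (Fin d)) (hy0 : y 0 = x 0)
    (hy : ∀ k, y (k + 1) = x (k + 1) + θ (k + 1) • (x (k + 1) - x k)) :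
    ∀ k, 1 ≤ k →
      ∑ i ∈ range k, (∏ j ∈ Ico (i+1) k, θ j) • (y i - x (i+1)) = x (k-1) - x k := by
  intro k
  induction k with
  | zero => omega
  | succ n ih =>
    intro _
    rcases Nat.eq_zero_or_pos n with hn | hn
    · subst hn
      simp [hy0]
    · have step : ∑ i ∈ range (n+1), (∏ j ∈ Ico (i+1) (n+1), θ j) • (y i - x (i+1))
          = θ n • (∑ i ∈ range n, (∏ j ∈ Ico (i+1) n, θ j) • (y i - x (i+1)))
            + (y n - x (n+1)) := by
        rw [Finset.sum_range_succ, Finset.smul_sum]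
        congr 1
        · apply Finset.sum_congr rfl
          intro i hi
          rw [Finset.mem_range] at hi
          rw [Finset.prod_Ico_succ_top (by omega : i + 1 ≤ n), smul_smul, mul_comm]
        · rw [Finset.Ico_self, Finset.prod_empty, one_smul]
      rw [step, ih hn]
      obtain ⟨n', rfl⟩ : ∃ n', n = n' + 1 := ⟨n - 1, by omega⟩
      rw [hy n']
      simp only [Nat.add_sub_cancel]
      rw [smul_sub, smul_sub]
      abel

lemma pair_bound' (θ : ℕ → ℝ) (hθ : ∀ k, 1 ≤ k → θ k ∈ Set.Icc (0:ℝ) 1)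
    (x y : ℕ → EuclideanSpace ℝ (Fin d)) (hy0 : y 0 = x 0)
    (hy : ∀ k, y (k + 1) = x (k + 1) + θ (k + 1) • (x (k + 1) - x k))
    (i j : ℕ) (hij : i < j) :
    ‖y j - y i‖ ^ 2 ≤ ((j:ℝ) - i + 4) * ∑ m ∈ Icc i j, ‖x m - x (m-1)‖ ^ 2 := by
  set θ' : ℕ → ℝ := fun n => if n = 0 then 0 else θ n with hθ'
  have hθ'mem : ∀ n, 0 ≤ θ' n ∧ θ' n ≤ 1 := by
    intro n
    rcases Nat.eq_zero_or_pos n with h | h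
    · subst h; simp [hθ']
    · have := hθ n h
      simp only [hθ', if_neg (by omega : ¬ n = 0)]
      exact ⟨this.1, this.2⟩
  have hyθ' : ∀ n, y n = x n + θ' n • (x n - x (n-1)) := by
    intro n
    cases n with
    | zero => simp [hθ', hy0]
    | succ m => simp only [hθ', hy m, Nat.add_sub_cancel, if_neg (Nat.succ_ne_zero m)]
  set c : ℕ → ℝ := fun n => if n = i then -(θ' i) else if n = j then 1 + θ' j else 1 with hc
  set Δ : ℕ → EuclideanSpace ℝ (Fin d) := fun n => x n - x (n-1) with hΔ
  have hident : y j - y i = ∑ m ∈ Icc i j, c m • Δ m := by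
    have hnotmem : i ∉ Icc (i+1) j := by simp
    have hins : Icc i j = insert i (Icc (i+1) j) := by
      ext a; simp only [Finset.mem_Icc, Finset.mem_insert]; omega
    have hmid : ∑ m ∈ Icc (i+1) j, c m • Δ m
        = (∑ m ∈ Icc (i+1) j, Δ m) + θ' j • Δ j := by
      have : ∀ m ∈ Icc (i+1) j, c m • Δ m = Δ m + (if m = j then θ' j • Δ j else 0) := by
        intro m hm
        rw [Finset.mem_Icc] at hm
        by_cases hmj : m = j
        · subst hmj
          rw [if_pos rfl]
          have hcm : c m = 1 + θ' m := by
            simp [hc, if_neg (by omega : ¬ m = i)]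
          rw [hcm, add_smul, one_smul]
        · rw [if_neg hmj]
          have hcm : c m = 1 := by
            simp [hc, if_neg (by omega : ¬ m = i), hmj]
          rw [hcm, one_smul, add_zero]
      rw [Finset.sum_congr rfl this, Finset.sum_add_distrib,
        Finset.sum_ite_eq' (Icc (i+1) j) j, if_pos (by simp [Finset.mem_Icc]; omega)]
    rw [hins, Finset.sum_insert hnotmem, hmid]
    have hci : c i = -(θ' i) := by rw [hc]; simp
    have e3 : (∑ m ∈ Icc (i+1) j, Δ m) = x j - x i := by
      rw [telesc' x i j hij.le]
    rw [hci, e3, hyθ' i, hyθ' j, neg_smul]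
    have hΔi : Δ i = x i - x (i-1) := rfl
    have hΔj : Δ j = x j - x (j-1) := rfl
    rw [hΔi, hΔj]
    abel
  have hnorm1 : ‖y j - y i‖ ≤ ∑ m ∈ Icc i j, |c m| * ‖Δ m‖ := by
    rw [hident]
    calc ‖∑ m ∈ Icc i j, c m • Δ m‖ ≤ ∑ m ∈ Icc i j, ‖c m • Δ m‖ :=
        norm_sum_le _ _
      _ = ∑ m ∈ Icc i j, |c m| * ‖Δ m‖ := by
        apply Finset.sum_congr rfl
        intro m _
        rw [norm_smul, Real.norm_eq_abs]
  have hcs : (∑ m ∈ Icc i j, |c m| * ‖Δ m‖) ^ 2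
      ≤ (∑ m ∈ Icc i j, (c m) ^ 2) * (∑ m ∈ Icc i j, ‖Δ m‖ ^ 2) := by
    have := Finset.sum_mul_sq_le_sq_mul_sq (Icc i j) (fun m => |c m|) (fun m => ‖Δ m‖)
    simpa [sq_abs] using this
  have hcsum : ∑ m ∈ Icc i j, (c m) ^ 2 ≤ (j:ℝ) - i + 4 := by
    have hterm : ∀ m ∈ Icc i j, (c m) ^ 2 ≤ 1 + (if m = j then 3 else 0) := by
      intro m _
      rw [hc]
      by_cases hmi : m = i
      · simp only [if_pos hmi]
        have := hθ'mem i
        split_ifs <;> nlinarith [this.1, this.2]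
      · by_cases hmj : m = j
        · simp only [if_neg hmi, if_pos hmj]
          have := hθ'mem j
          nlinarith [this.1, this.2]
        · simp only [if_neg hmi, if_neg hmj]
          norm_num
    calc ∑ m ∈ Icc i j, (c m) ^ 2 ≤ ∑ m ∈ Icc i j, (1 + (if m = j then 3 else 0)) :=
        Finset.sum_le_sum hterm
      _ = (Icc i j).card + 3 := by
        rw [Finset.sum_add_distrib, Finset.sum_const, Finset.sum_ite_eq' (Icc i j) j,
          if_pos (by simp [Finset.mem_Icc]; omega)]
        simp
      _ = (j:ℝ) - i + 4 := by
        rw [Nat.card_Icc]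
        rw [Nat.cast_sub (by omega : i ≤ j + 1)]
        push_cast
        ring
  have hΔsum0 : (0:ℝ) ≤ ∑ m ∈ Icc i j, ‖Δ m‖ ^ 2 :=
    Finset.sum_nonneg (fun m _ => sq_nonneg _)
  have hgoal : (∑ m ∈ Icc i j, ‖x m - x (m-1)‖ ^ 2) = ∑ m ∈ Icc i j, ‖Δ m‖ ^ 2 := rfl
  rw [hgoal]
  calc ‖y j - y i‖ ^ 2 ≤ (∑ m ∈ Icc i j, |c m| * ‖Δ m‖) ^ 2 :=
      pow_le_pow_left₀ (norm_nonneg _) hnorm1 2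
    _ ≤ (∑ m ∈ Icc i j, (c m) ^ 2) * (∑ m ∈ Icc i j, ‖Δ m‖ ^ 2) := hcs
    _ ≤ ((j:ℝ) - i + 4) * (∑ m ∈ Icc i j, ‖Δ m‖ ^ 2) :=
      mul_le_mul_of_nonneg_right hcsum hΔsum0

end AuxiliaryLemmas

set_option maxHeartbeats 1000000

/-- If `f` is twice differentiable with `M_f`-Lipschitz Hessian and `(x_k), (y_k)` are the
AGD iterates `x_k = y_{k−1} − (1/L)∇f(y_{k−1})`, `y_k = x_k + θ_k(x_k − x_{k−1})` starting
from `x_{−1} = x_0 = y_0`, then for all `k ≥ 1` the averaged point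
`ȳ_k = Σ_{i<k} p_{k,i} y_i` satisfies
`‖∇f(ȳ_k)‖ ≤ (L/Z_k)‖x_k − x_{k−1}‖ + ((k−1)(k+5)²/(16 Z_k²)) M_f S_k`
where `S_k = Σ_{i=1}^k ‖x_i − x_{i−1}‖²`. -/
theorem grad_ybar_upperbound {d : ℕ} (f : EuclideanSpace ℝ (Fin d) → ℝ) (Mf : ℝ)
    (hf : Differentiable ℝ f) (hf' : Differentiable ℝ (gradient f))
    (hM : ∀ a b : EuclideanSpace ℝ (Fin d),
      ‖fderiv ℝ (gradient f) a - fderiv ℝ (gradient f) b‖ ≤ Mf * ‖a - b‖)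
    (L : ℝ) (hL : 0 < L) (θ : ℕ → ℝ) (hθ : ∀ k, 1 ≤ k → θ k ∈ Set.Icc (0 : ℝ) 1)
    (x y : ℕ → EuclideanSpace ℝ (Fin d)) (hy0 : y 0 = x 0)
    (hx : ∀ k, x (k + 1) = y k - (1 / L) • gradient f (y k))
    (hy : ∀ k, y (k + 1) = x (k + 1) + θ (k + 1) • (x (k + 1) - x k)) :
    ∀ k, 1 ≤ k →
      ‖gradient f (∑ i ∈ Finset.range k, pki θ k i • y i)‖ ≤
        L / Zk θ k * ‖x k - x (k - 1)‖ +
          ((k : ℝ) - 1) * ((k : ℝ) + 5) ^ 2 / (16 * Zk θ k ^ 2) * Mf *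
            ∑ i ∈ Finset.Icc 1 k, ‖x i - x (i - 1)‖ ^ 2 := by
  intro k hk
  -- basic facts about the weights
  have ha0 : ∀ i : ℕ, (0:ℝ) ≤ ∏ j ∈ Ico (i+1) k, θ j := by
    intro i
    apply Finset.prod_nonneg
    intro j hj
    rw [Finset.mem_Ico] at hj
    exact (hθ j (by omega)).1
  have ha1 : ∀ i : ℕ, (∏ j ∈ Ico (i+1) k, θ j) ≤ 1 := by
    intro i
    apply Finset.prod_le_one
    · intro j hj
      rw [Finset.mem_Ico] at hj
      exact (hθ j (by omega)).1
    · intro j hj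
      rw [Finset.mem_Ico] at hj
      exact (hθ j (by omega)).2
  have haone : (∏ j ∈ Ico ((k-1)+1) k, θ j) = 1 := by
    rw [show k-1+1 = k by omega, Finset.Ico_self, Finset.prod_empty]
  have hZ1 : 1 ≤ Zk θ k := by
    calc (1:ℝ) = ∏ j ∈ Ico ((k-1)+1) k, θ j := haone.symm
      _ ≤ ∑ i ∈ range k, ∏ j ∈ Ico (i+1) k, θ j :=
          Finset.single_le_sum (f := fun i => ∏ j ∈ Ico (i+1) k, θ j)
            (fun i _ => ha0 i) (Finset.mem_range.mpr (by omega))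
      _ = Zk θ k := rfl
  have hZ0 : 0 < Zk θ k := by linarith
  have hpa : ∀ i : ℕ, pki θ k i = (∏ j ∈ Ico (i+1) k, θ j) / Zk θ k := fun i => rfl
  have hp0 : ∀ i : ℕ, 0 ≤ pki θ k i := by
    intro i; rw [hpa i]; exact div_nonneg (ha0 i) hZ0.le
  have hpsum : ∑ i ∈ range k, pki θ k i = 1 := by
    have e : ∑ i ∈ range k, pki θ k i
        = (∑ i ∈ range k, ∏ j ∈ Ico (i+1) k, θ j) / Zk θ k := by
      rw [Finset.sum_div]
      exact Finset.sum_congr rfl (fun i _ => hpa i)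
    rw [e]
    have : (∑ i ∈ range k, ∏ j ∈ Ico (i+1) k, θ j) = Zk θ k := rfl
    rw [this, div_self hZ0.ne']
  -- dimension zero: everything is trivial
  rcases Nat.eq_zero_or_pos d with hd | hd
  · subst hd
    haveI : Subsingleton (EuclideanSpace ℝ (Fin 0)) :=
      ⟨fun a b => by ext i; exact i.elim0⟩
    have hnorm0 : ∀ v : EuclideanSpace ℝ (Fin 0), ‖v‖ = 0 := fun v => by
      rw [Subsingleton.elim v 0, norm_zero]
    rw [hnorm0, hnorm0]
    have hs0 : ∑ i ∈ Finset.Icc 1 k, ‖x i - x (i-1)‖ ^ 2 = 0 := by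
      apply Finset.sum_eq_zero
      intro i _
      rw [hnorm0]
      norm_num
    rw [hs0]
    simp
  -- Mf is nonnegative
  have hMf : 0 ≤ Mf := by
    have h1 := hM (EuclideanSpace.single (⟨0, hd⟩ : Fin d) (1:ℝ)) 0
    rw [sub_zero, EuclideanSpace.norm_single, norm_one, mul_one] at h1
    exact le_trans (norm_nonneg _) h1
  set ybar := ∑ i ∈ Finset.range k, pki θ k i • y i with hybar
  -- the gradient at each iterate
  have hgrad : ∀ i : ℕ, gradient f (y i) = L • (y i - x (i+1)) := by
    intro i
    have h2 : (1/L) • gradient f (y i) = y i - x (i+1) := by rw [hx i]; abel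
    calc gradient f (y i) = L • ((1/L) • gradient f (y i)) := by
          rw [smul_smul, mul_one_div, div_self hL.ne', one_smul]
      _ = L • (y i - x (i+1)) := by rw [h2]
  -- the weighted gradient sum telescopes
  have hTel := gradsum_telesc' θ x y hy0 hy k hk
  have hgradsum : ∑ i ∈ range k, pki θ k i • gradient f (y i)
      = (L / Zk θ k) • (x (k-1) - x k) := by
    calc ∑ i ∈ range k, pki θ k i • gradient f (y i)
        = ∑ i ∈ range k, (L / Zk θ k) • ((∏ j ∈ Ico (i+1) k, θ j) • (y i - x (i+1))) := by
          apply Finset.sum_congr rfl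
          intro i _
          rw [hgrad i, hpa i, smul_smul, smul_smul]
          congr 1
          ring
      _ = (L / Zk θ k) • (∑ i ∈ range k, (∏ j ∈ Ico (i+1) k, θ j) • (y i - x (i+1))) :=
          (Finset.smul_sum).symm
      _ = (L / Zk θ k) • (x (k-1) - x k) := by rw [hTel]
  have hfirst : ‖∑ i ∈ range k, pki θ k i • gradient f (y i)‖
      = L / Zk θ k * ‖x k - x (k-1)‖ := by
    rw [hgradsum, norm_smul, Real.norm_eq_abs, abs_of_pos (div_pos hL hZ0), norm_sub_rev]
  -- decomposition into telescoped sum plus Taylor errors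
  have hdecomp : gradient f ybar - ∑ i ∈ range k, pki θ k i • gradient f (y i)
      = ∑ i ∈ range k, pki θ k i •
          (gradient f ybar - gradient f (y i)
            - (fderiv ℝ (gradient f) ybar) (ybar - y i)) := by
    have e1 : ∑ i ∈ range k, pki θ k i • gradient f ybar = gradient f ybar := by
      rw [← Finset.sum_smul, hpsum, one_smul]
    have e3 : ∑ i ∈ range k, pki θ k i • (ybar - y i) = 0 := by
      simp only [smul_sub]
      rw [Finset.sum_sub_distrib, ← Finset.sum_smul, hpsum, one_smul, ← hybar, sub_self]
    have e2 : ∑ i ∈ range k, pki θ k i • (fderiv ℝ (gradient f) ybar) (ybar - y i)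
        = 0 := by
      have : ∀ i ∈ range k, pki θ k i • (fderiv ℝ (gradient f) ybar) (ybar - y i)
          = (fderiv ℝ (gradient f) ybar) (pki θ k i • (ybar - y i)) := by
        intro i _; rw [map_smul]
      rw [Finset.sum_congr rfl this, ← map_sum, e3, map_zero]
    symm
    calc ∑ i ∈ range k, pki θ k i •
          (gradient f ybar - gradient f (y i)
            - (fderiv ℝ (gradient f) ybar) (ybar - y i))
        = (∑ i ∈ range k, pki θ k i • gradient f ybar)
          - (∑ i ∈ range k, pki θ k i • gradient f (y i))
          - (∑ i ∈ range k, pki θ k i • (fderiv ℝ (gradient f) ybar) (ybar - y i)) := by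
          simp only [smul_sub]
          rw [Finset.sum_sub_distrib, Finset.sum_sub_distrib]
      _ = gradient f ybar - (∑ i ∈ range k, pki θ k i • gradient f (y i)) - 0 := by
          rw [e1, e2]
      _ = _ := by rw [sub_zero]
  have htaylor : ∀ i ∈ range k,
      ‖gradient f ybar - gradient f (y i)
        - (fderiv ℝ (gradient f) ybar) (ybar - y i)‖ ≤ Mf / 2 * ‖y i - ybar‖ ^ 2 := by
    intro i _
    have h1 := taylor_bound' f Mf hf' hM ybar (y i)
    have h2 : gradient f ybar - gradient f (y i)
        - (fderiv ℝ (gradient f) ybar) (ybar - y i)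
        = -(gradient f (y i) - gradient f ybar
            - (fderiv ℝ (gradient f) ybar) (y i - ybar)) := by
      rw [map_sub, map_sub]
      abel
    rw [h2, norm_neg]
    exact h1
  have hsplit : ‖gradient f ybar‖
      ≤ L / Zk θ k * ‖x k - x (k-1)‖
        + Mf / 2 * ∑ i ∈ range k, pki θ k i * ‖y i - ybar‖ ^ 2 := by
    have step1 : ‖gradient f ybar‖
        ≤ ‖∑ i ∈ range k, pki θ k i • gradient f (y i)‖
          + ‖gradient f ybar - ∑ i ∈ range k, pki θ k i • gradient f (y i)‖ := by
      have e : gradient f ybar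
          = (∑ i ∈ range k, pki θ k i • gradient f (y i))
            + (gradient f ybar - ∑ i ∈ range k, pki θ k i • gradient f (y i)) := by
        abel
      calc ‖gradient f ybar‖
          = ‖(∑ i ∈ range k, pki θ k i • gradient f (y i))
              + (gradient f ybar - ∑ i ∈ range k, pki θ k i • gradient f (y i))‖ := by
            rw [← e]
        _ ≤ _ := norm_add_le _ _
    have step2 : ‖gradient f ybar - ∑ i ∈ range k, pki θ k i • gradient f (y i)‖
        ≤ Mf / 2 * ∑ i ∈ range k, pki θ k i * ‖y i - ybar‖ ^ 2 := by
      rw [hdecomp]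
      calc ‖∑ i ∈ range k, pki θ k i •
            (gradient f ybar - gradient f (y i)
              - (fderiv ℝ (gradient f) ybar) (ybar - y i))‖
          ≤ ∑ i ∈ range k, ‖pki θ k i •
            (gradient f ybar - gradient f (y i)
              - (fderiv ℝ (gradient f) ybar) (ybar - y i))‖ := norm_sum_le _ _
        _ ≤ ∑ i ∈ range k, pki θ k i * (Mf / 2 * ‖y i - ybar‖ ^ 2) := by
            apply Finset.sum_le_sum
            intro i hi
            rw [norm_smul, Real.norm_eq_abs, abs_of_nonneg (hp0 i)]
            exact mul_le_mul_of_nonneg_left (htaylor i hi) (hp0 i)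
        _ = Mf / 2 * ∑ i ∈ range k, pki θ k i * ‖y i - ybar‖ ^ 2 := by
            rw [Finset.mul_sum]
            apply Finset.sum_congr rfl
            intro i _
            ring
    calc ‖gradient f ybar‖ ≤ _ := step1
      _ ≤ L / Zk θ k * ‖x k - x (k-1)‖
          + Mf / 2 * ∑ i ∈ range k, pki θ k i * ‖y i - ybar‖ ^ 2 := by
        rw [hfirst]
        exact add_le_add_right step2 _
  -- variance identity
  have hvar : ∑ i ∈ range k, pki θ k i * ‖y i - ybar‖ ^ 2
      = (1/2) * ∑ i ∈ range k, ∑ j ∈ range k,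
          pki θ k i * pki θ k j * ‖y i - y j‖ ^ 2 := by
    rw [hybar]
    exact var_ident' (range k) (pki θ k) y hpsum
  -- conversion of local interval sums to the global Icc 1 k sum
  have hconv : ∀ i j : ℕ, i < j → j < k →
      (∑ m ∈ Icc i j, ‖x m - x (m-1)‖ ^ 2)
      = ∑ m ∈ Icc 1 k, (if i ≤ m ∧ m ≤ j then ‖x m - x (m-1)‖ ^ 2 else 0) := by
    intro i j hij hjk
    rw [← Finset.sum_filter]
    have hfe : (Icc 1 k).filter (fun m => i ≤ m ∧ m ≤ j) = Icc (max i 1) j := by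
      ext a
      simp only [Finset.mem_filter, Finset.mem_Icc]
      omega
    rw [hfe]
    by_cases hi : i = 0
    · subst hi
      have hins : Icc 0 j = insert 0 (Icc 1 j) := by
        ext a; simp only [Finset.mem_Icc, Finset.mem_insert]; omega
      rw [hins, Finset.sum_insert (by simp)]
      have h0 : ‖x 0 - x (0-1)‖ ^ 2 = (0:ℝ) := by
        rw [show (0:ℕ) - 1 = 0 from rfl, sub_self, norm_zero]
        norm_num
      rw [h0, zero_add]
      congr 1
    · have : max i 1 = i := by omega
      rw [this]
  -- pairwise bounds
  have hpair : ∀ i ∈ range k, ∀ j ∈ range k,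
      pki θ k i * pki θ k j * ‖y i - y j‖ ^ 2
      ≤ ∑ m ∈ Icc 1 k, (if min i j ≤ m ∧ m ≤ max i j ∧ i ≠ j then
          pki θ k i * pki θ k j * (((max i j - min i j : ℕ) : ℝ) + 4)
            * ‖x m - x (m-1)‖ ^ 2 else 0) := by
    intro i hi j hj
    rw [Finset.mem_range] at hi hj
    have hpp : 0 ≤ pki θ k i * pki θ k j := mul_nonneg (hp0 i) (hp0 j)
    rcases lt_trichotomy i j with h | h | h
    · have hb := pair_bound' θ hθ x y hy0 hy i j h
      have hmin : min i j = i := min_eq_left h.le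
      have hmax : max i j = j := max_eq_right h.le
      have hcast : ((j - i : ℕ) : ℝ) = (j:ℝ) - i := Nat.cast_sub h.le
      have hRHS : (∑ m ∈ Icc 1 k, (if min i j ≤ m ∧ m ≤ max i j ∧ i ≠ j then
            pki θ k i * pki θ k j * (((max i j - min i j : ℕ) : ℝ) + 4)
              * ‖x m - x (m-1)‖ ^ 2 else 0))
          = pki θ k i * pki θ k j * (((j:ℝ) - i) + 4)
              * ∑ m ∈ Icc i j, ‖x m - x (m-1)‖ ^ 2 := by
        rw [hconv i j h hj, Finset.mul_sum]
        apply Finset.sum_congr rfl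
        intro m _
        rw [hmin, hmax, hcast]
        by_cases hcond : i ≤ m ∧ m ≤ j
        · rw [if_pos ⟨hcond.1, hcond.2, by omega⟩, if_pos hcond]
        · rw [if_neg (by tauto), if_neg hcond, mul_zero]
      rw [hRHS]
      calc pki θ k i * pki θ k j * ‖y i - y j‖ ^ 2
          ≤ pki θ k i * pki θ k j
            * (((j:ℝ) - i + 4) * ∑ m ∈ Icc i j, ‖x m - x (m-1)‖ ^ 2) := by
            apply mul_le_mul_of_nonneg_left _ hpp
            rw [norm_sub_rev]
            exact hb
        _ = pki θ k i * pki θ k j * (((j:ℝ) - i) + 4)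
              * ∑ m ∈ Icc i j, ‖x m - x (m-1)‖ ^ 2 := by ring
    · subst h
      have hz : ∀ m ∈ Icc 1 k, (if min i i ≤ m ∧ m ≤ max i i ∧ i ≠ i then
          pki θ k i * pki θ k i * (((max i i - min i i : ℕ) : ℝ) + 4)
            * ‖x m - x (m-1)‖ ^ 2 else 0) = 0 := by
        intro m _
        rw [if_neg (by tauto)]
      rw [Finset.sum_eq_zero hz, sub_self, norm_zero]
      norm_num
    · have hb := pair_bound' θ hθ x y hy0 hy j i h
      have hmin : min i j = j := min_eq_right h.le
      have hmax : max i j = i := max_eq_left h.le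
      have hcast : ((i - j : ℕ) : ℝ) = (i:ℝ) - j := Nat.cast_sub h.le
      have hRHS : (∑ m ∈ Icc 1 k, (if min i j ≤ m ∧ m ≤ max i j ∧ i ≠ j then
            pki θ k i * pki θ k j * (((max i j - min i j : ℕ) : ℝ) + 4)
              * ‖x m - x (m-1)‖ ^ 2 else 0))
          = pki θ k i * pki θ k j * (((i:ℝ) - j) + 4)
              * ∑ m ∈ Icc j i, ‖x m - x (m-1)‖ ^ 2 := by
        rw [hconv j i h hi, Finset.mul_sum]
        apply Finset.sum_congr rfl
        intro m _
        rw [hmin, hmax, hcast]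
        by_cases hcond : j ≤ m ∧ m ≤ i
        · rw [if_pos ⟨hcond.1, hcond.2, by omega⟩, if_pos hcond]
        · rw [if_neg (by tauto), if_neg hcond, mul_zero]
      rw [hRHS]
      calc pki θ k i * pki θ k j * ‖y i - y j‖ ^ 2
          ≤ pki θ k i * pki θ k j
            * (((i:ℝ) - j + 4) * ∑ m ∈ Icc j i, ‖x m - x (m-1)‖ ^ 2) := by
            apply mul_le_mul_of_nonneg_left _ hpp
            exact hb
        _ = pki θ k i * pki θ k j * (((i:ℝ) - j) + 4)
              * ∑ m ∈ Icc j i, ‖x m - x (m-1)‖ ^ 2 := by ring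
  -- the double sum bound
  have hdouble : ∑ i ∈ range k, ∑ j ∈ range k,
      pki θ k i * pki θ k j * ‖y i - y j‖ ^ 2
      ≤ (1 / Zk θ k ^ 2 * (((k:ℝ) - 1) * ((k:ℝ) + 5) ^ 2 / 4))
          * ∑ m ∈ Icc 1 k, ‖x m - x (m-1)‖ ^ 2 := by
    have step1 : ∑ i ∈ range k, ∑ j ∈ range k,
        pki θ k i * pki θ k j * ‖y i - y j‖ ^ 2
        ≤ ∑ i ∈ range k, ∑ j ∈ range k, ∑ m ∈ Icc 1 k,
            (if min i j ≤ m ∧ m ≤ max i j ∧ i ≠ j then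
              pki θ k i * pki θ k j * (((max i j - min i j : ℕ) : ℝ) + 4)
                * ‖x m - x (m-1)‖ ^ 2 else 0) := by
      apply Finset.sum_le_sum
      intro i hi
      apply Finset.sum_le_sum
      intro j hj
      exact hpair i hi j hj
    have swap : ∑ i ∈ range k, ∑ j ∈ range k, ∑ m ∈ Icc 1 k,
        (if min i j ≤ m ∧ m ≤ max i j ∧ i ≠ j then
          pki θ k i * pki θ k j * (((max i j - min i j : ℕ) : ℝ) + 4)
            * ‖x m - x (m-1)‖ ^ 2 else 0)
        = ∑ m ∈ Icc 1 k, ∑ i ∈ range k, ∑ j ∈ range k,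
        (if min i j ≤ m ∧ m ≤ max i j ∧ i ≠ j then
          pki θ k i * pki θ k j * (((max i j - min i j : ℕ) : ℝ) + 4)
            * ‖x m - x (m-1)‖ ^ 2 else 0) := by
      rw [Finset.sum_congr rfl (fun i _ => Finset.sum_comm), Finset.sum_comm]
    have perm : ∀ m ∈ Icc 1 k, ∑ i ∈ range k, ∑ j ∈ range k,
        (if min i j ≤ m ∧ m ≤ max i j ∧ i ≠ j then
          pki θ k i * pki θ k j * (((max i j - min i j : ℕ) : ℝ) + 4)
            * ‖x m - x (m-1)‖ ^ 2 else 0)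
        ≤ (1 / Zk θ k ^ 2 * (((k:ℝ) - 1) * ((k:ℝ) + 5) ^ 2 / 4))
            * ‖x m - x (m-1)‖ ^ 2 := by
      intro m _
      have hfac : ∑ i ∈ range k, ∑ j ∈ range k,
          (if min i j ≤ m ∧ m ≤ max i j ∧ i ≠ j then
            pki θ k i * pki θ k j * (((max i j - min i j : ℕ) : ℝ) + 4)
              * ‖x m - x (m-1)‖ ^ 2 else 0)
          = (∑ i ∈ range k, ∑ j ∈ range k,
              (if min i j ≤ m ∧ m ≤ max i j ∧ i ≠ j then
                (∏ l ∈ Ico (i+1) k, θ l) * (∏ l ∈ Ico (j+1) k, θ l)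
                  * (((max i j - min i j : ℕ) : ℝ) + 4) else 0))
            * (1 / Zk θ k ^ 2 * ‖x m - x (m-1)‖ ^ 2) := by
        rw [Finset.sum_mul]
        apply Finset.sum_congr rfl
        intro i _
        rw [Finset.sum_mul]
        apply Finset.sum_congr rfl
        intro j _
        by_cases hcond : min i j ≤ m ∧ m ≤ max i j ∧ i ≠ j
        · rw [if_pos hcond, if_pos hcond, hpa i, hpa j]
          ring
        · rw [if_neg hcond, if_neg hcond, zero_mul]
      rw [hfac]
      have hcount := count_le' k m hk (fun i => ∏ l ∈ Ico (i+1) k, θ l) ha0 ha1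
      have hnn : (0:ℝ) ≤ 1 / Zk θ k ^ 2 * ‖x m - x (m-1)‖ ^ 2 := by
        apply mul_nonneg _ (sq_nonneg _)
        positivity
      calc (∑ i ∈ range k, ∑ j ∈ range k,
              (if min i j ≤ m ∧ m ≤ max i j ∧ i ≠ j then
                (∏ l ∈ Ico (i+1) k, θ l) * (∏ l ∈ Ico (j+1) k, θ l)
                  * (((max i j - min i j : ℕ) : ℝ) + 4) else 0))
            * (1 / Zk θ k ^ 2 * ‖x m - x (m-1)‖ ^ 2)
          ≤ (((k:ℝ) - 1) * ((k:ℝ) + 5) ^ 2 / 4)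
            * (1 / Zk θ k ^ 2 * ‖x m - x (m-1)‖ ^ 2) :=
            mul_le_mul_of_nonneg_right hcount hnn
        _ = (1 / Zk θ k ^ 2 * (((k:ℝ) - 1) * ((k:ℝ) + 5) ^ 2 / 4))
            * ‖x m - x (m-1)‖ ^ 2 := by ring
    calc ∑ i ∈ range k, ∑ j ∈ range k, pki θ k i * pki θ k j * ‖y i - y j‖ ^ 2
        ≤ _ := step1
      _ = _ := swap
      _ ≤ ∑ m ∈ Icc 1 k, (1 / Zk θ k ^ 2 * (((k:ℝ) - 1) * ((k:ℝ) + 5) ^ 2 / 4))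
            * ‖x m - x (m-1)‖ ^ 2 := Finset.sum_le_sum perm
      _ = (1 / Zk θ k ^ 2 * (((k:ℝ) - 1) * ((k:ℝ) + 5) ^ 2 / 4))
            * ∑ m ∈ Icc 1 k, ‖x m - x (m-1)‖ ^ 2 := by rw [Finset.mul_sum]
  -- final assembly
  have hK1 : (1:ℝ) ≤ (k:ℝ) := by exact_mod_cast hk
  have hS0 : (0:ℝ) ≤ ∑ m ∈ Icc 1 k, ‖x m - x (m-1)‖ ^ 2 :=
    Finset.sum_nonneg (fun m _ => sq_nonneg _)
  calc ‖gradient f ybar‖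
      ≤ L / Zk θ k * ‖x k - x (k-1)‖
        + Mf / 2 * ∑ i ∈ range k, pki θ k i * ‖y i - ybar‖ ^ 2 := hsplit
    _ = L / Zk θ k * ‖x k - x (k-1)‖
        + Mf / 2 * ((1/2) * ∑ i ∈ range k, ∑ j ∈ range k,
            pki θ k i * pki θ k j * ‖y i - y j‖ ^ 2) := by rw [hvar]
    _ ≤ L / Zk θ k * ‖x k - x (k-1)‖
        + Mf / 2 * ((1/2) * ((1 / Zk θ k ^ 2 * (((k:ℝ) - 1) * ((k:ℝ) + 5) ^ 2 / 4))
            * ∑ m ∈ Icc 1 k, ‖x m - x (m-1)‖ ^ 2)) := by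
        apply add_le_add_right
        apply mul_le_mul_of_nonneg_left _ (by linarith : (0:ℝ) ≤ Mf / 2)
        apply mul_le_mul_of_nonneg_left hdouble (by norm_num)
    _ = L / Zk θ k * ‖x k - x (k-1)‖
        + ((k : ℝ) - 1) * ((k : ℝ) + 5) ^ 2 / (16 * Zk θ k ^ 2) * Mf *
            ∑ i ∈ Finset.Icc 1 k, ‖x i - x (i - 1)‖ ^ 2 := by
        have : Mf / 2 * ((1/2) * ((1 / Zk θ k ^ 2 * (((k:ℝ) - 1) * ((k:ℝ) + 5) ^ 2 / 4))
            * ∑ m ∈ Icc 1 k, ‖x m - x (m-1)‖ ^ 2))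
            = ((k : ℝ) - 1) * ((k : ℝ) + 5) ^ 2 / (16 * Zk θ k ^ 2) * Mf *
            ∑ i ∈ Finset.Icc 1 k, ‖x i - x (i - 1)‖ ^ 2 := by
          have hZ2 : Zk θ k ^ 2 ≠ 0 := pow_ne_zero 2 hZ0.ne'
          field_simp
          ring
        rw [this]
end
end

section
/- Let f : ℝ^d → ℝ be differentiable, L > 0, θ_1, θ_2, … ∈ [0, 1], and let sequences (x_k), (y_k) in ℝ^d be defined by x_{−1} = x_0 = y_0 and, for k ≥ 1, x_k = y_{k−1} − (1/L)∇f(y_{k−1}) and y_k = x_k + θ_k(x_k − x_{k−1}). Define p_{k,i} := (Π_{j=i+1}^{k−1} θ_j)/Z_k with Z_k := Σ_{i=0}^{k−1} Π_{j=i+1}^{k−1} θ_j. Then for all k ≥ 1, Σ_{i=0}^{k−1} p_{k,i} ∇f(y_i) = −L·p_{k,k−1}·(x_k − x_{k−1}). -/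
noncomputable section

/-- For the AGD iterates `x_k = y_{k−1} − (1/L)∇f(y_{k−1})`,
`y_k = x_k + θ_k(x_k − x_{k−1})` starting from `x_{−1} = x_0 = y_0`, one has, for all
`k ≥ 1`, `Σ_{i=0}^{k−1} p_{k,i} ∇f(y_i) = −L p_{k,k−1} (x_k − x_{k−1})`. -/
theorem weighted_average_gradient_eq {d : ℕ} (f : EuclideanSpace ℝ (Fin d) → ℝ)
    (hf : Differentiable ℝ f)
    (L : ℝ) (hL : 0 < L) (θ : ℕ → ℝ) (hθ : ∀ k, 1 ≤ k → θ k ∈ Set.Icc (0 : ℝ) 1)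
    (x y : ℕ → EuclideanSpace ℝ (Fin d)) (hy0 : y 0 = x 0)
    (hx : ∀ k, x (k + 1) = y k - (1 / L) • gradient f (y k))
    (hy : ∀ k, y (k + 1) = x (k + 1) + θ (k + 1) • (x (k + 1) - x k)) :
    ∀ k, 1 ≤ k →
      ∑ i ∈ Finset.range k, pki θ k i • gradient f (y i) =
        -((L * pki θ k (k - 1)) • (x k - x (k - 1))) := by
  have hgrad : ∀ i, gradient f (y i) = L • (y i - x (i + 1)) := by
    intro i
    have h1 : (1 / L) • gradient f (y i) = y i - x (i + 1) := by
      rw [hx i]; abel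
    have := congrArg (fun v => L • v) h1
    simpa [smul_smul, mul_one_div, div_self hL.ne', mul_inv_cancel₀ hL.ne'] using this
  -- unnormalized key identity
  have key : ∀ n : ℕ,
      ∑ i ∈ Finset.range (n + 1),
          (∏ j ∈ Finset.Ico (i + 1) (n + 1), θ j) • gradient f (y i)
        = -(L • (x (n + 1) - x n)) := by
    intro n
    induction n with
    | zero =>
      rw [Finset.sum_range_one]
      rw [Finset.Ico_self, Finset.prod_empty, one_smul, hgrad 0, hy0]
      module
    | succ n ih =>
      rw [Finset.sum_range_succ]
      have hprod : ∀ i ∈ Finset.range (n + 1),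
          (∏ j ∈ Finset.Ico (i + 1) (n + 1 + 1), θ j) • gradient f (y i)
            = θ (n + 1) • ((∏ j ∈ Finset.Ico (i + 1) (n + 1), θ j) • gradient f (y i)) := by
        intro i hi
        rw [Finset.prod_Ico_succ_top (by have := Finset.mem_range.mp hi; omega : i + 1 ≤ n + 1)]
        rw [smul_smul, mul_comm]
      rw [Finset.sum_congr rfl hprod, ← Finset.smul_sum, ih]
      rw [hgrad (n + 1), hy n]
      simp only [Finset.Ico_self, Finset.prod_empty, one_smul]
      module
  intro k hk
  obtain ⟨n, rfl⟩ : ∃ n, k = n + 1 := ⟨k - 1, by omega⟩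
  simp only [Nat.add_sub_cancel, pki]
  have lhs_eq : ∀ i ∈ Finset.range (n + 1),
      ((∏ j ∈ Finset.Ico (i + 1) (n + 1), θ j) / Zk θ (n + 1)) • gradient f (y i)
        = (Zk θ (n + 1))⁻¹ • ((∏ j ∈ Finset.Ico (i + 1) (n + 1), θ j) • gradient f (y i)) := by
    intro i _
    rw [smul_smul, div_eq_inv_mul]
  rw [Finset.sum_congr rfl lhs_eq, ← Finset.smul_sum, key n]
  simp only [Finset.Ico_self, Finset.prod_empty]
  rw [one_div]
  module
end
end

section
/- Let (x_l)_{l≥−1} be a sequence in ℝ^d with x_{−1} = x_0, let θ_0, θ_1, … ∈ [0, 1], and define y_l := x_l + θ_l(x_l − x_{l−1}) for l ≥ 0. Then for all 0 ≤ i < j, ‖y_i − y_j‖ ≤ √(j − i + 4) · (Σ_{l=i}^{j} ‖x_l − x_{l−1}‖²)^{1/2}. -/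
lemma telescope_Ioc {E : Type*} [AddCommGroup E] (f : ℕ → E) (i j : ℕ) (h : i ≤ j) :
    ∑ l ∈ Finset.Ioc i j, (f l - f (l - 1)) = f j - f i := by
  induction j, h using Nat.le_induction with
  | base => simp
  | succ n hn ih =>
    rw [← Nat.succ_eq_add_one, Finset.sum_Ioc_succ_top (by omega : i ≤ n), ih]
    simp only [Nat.succ_sub_one]
    abel

/-- Let `(x_l)_{l ≥ −1}` be a sequence with `x_{−1} = x_0` (encoded here with natural-number
indices, so that `x (l - 1)` at `l = 0` is `x 0`), `θ_l ∈ [0,1]` and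
`y_l = x_l + θ_l (x_l − x_{l−1})`. Then for all `0 ≤ i < j`,
`‖y_i − y_j‖ ≤ √(j − i + 4) · (Σ_{l=i}^{j} ‖x_l − x_{l−1}‖²)^{1/2}`. -/
theorem y_diff_upperbound {d : ℕ} (x : ℕ → EuclideanSpace ℝ (Fin d))
    (θ : ℕ → ℝ) (hθ : ∀ l, θ l ∈ Set.Icc (0 : ℝ) 1)
    (y : ℕ → EuclideanSpace ℝ (Fin d))
    (hy : ∀ l, y l = x l + θ l • (x l - x (l - 1)))
    (i j : ℕ) (hij : i < j) :
    ‖y i - y j‖ ≤ Real.sqrt ((j : ℝ) - (i : ℝ) + 4) *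
      Real.sqrt (∑ l ∈ Finset.Icc i j, ‖x l - x (l - 1)‖ ^ 2) := by
  set a : ℕ → ℝ := fun l => ‖x l - x (l - 1)‖ with ha
  have hann : ∀ l, 0 ≤ a l := fun l => norm_nonneg _
  set c : ℕ → ℝ := fun l => if l = j then 2 else 1 with hc
  have hjmem : j ∈ Finset.Icc i j := Finset.mem_Icc.mpr ⟨hij.le, le_rfl⟩
  -- Step 1: bound by weighted sum
  have hstep1 : ‖y i - y j‖ ≤ ∑ l ∈ Finset.Icc i j, c l * a l := by
    have hdecomp : y i - y j = θ i • (x i - x (i - 1)) - θ j • (x j - x (j - 1))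
        - ∑ l ∈ Finset.Ioc i j, (x l - x (l - 1)) := by
      rw [hy i, hy j, telescope_Ioc x i j hij.le]
      abel
    have h1 : ‖θ i • (x i - x (i - 1))‖ ≤ a i := by
      rw [norm_smul, Real.norm_eq_abs, abs_of_nonneg (hθ i).1]
      exact mul_le_of_le_one_left (norm_nonneg _) (hθ i).2
    have h2 : ‖θ j • (x j - x (j - 1))‖ ≤ a j := by
      rw [norm_smul, Real.norm_eq_abs, abs_of_nonneg (hθ j).1]
      exact mul_le_of_le_one_left (norm_nonneg _) (hθ j).2
    have h3 : ‖∑ l ∈ Finset.Ioc i j, (x l - x (l - 1))‖ ≤ ∑ l ∈ Finset.Ioc i j, a l :=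
      norm_sum_le _ _
    have hbound : ‖y i - y j‖ ≤ a i + a j + ∑ l ∈ Finset.Ioc i j, a l := by
      rw [hdecomp]
      calc ‖θ i • (x i - x (i - 1)) - θ j • (x j - x (j - 1))
            - ∑ l ∈ Finset.Ioc i j, (x l - x (l - 1))‖
          ≤ ‖θ i • (x i - x (i - 1)) - θ j • (x j - x (j - 1))‖
            + ‖∑ l ∈ Finset.Ioc i j, (x l - x (l - 1))‖ := norm_sub_le _ _
        _ ≤ (‖θ i • (x i - x (i - 1))‖ + ‖θ j • (x j - x (j - 1))‖)
            + ∑ l ∈ Finset.Ioc i j, a l := add_le_add (norm_sub_le _ _) h3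
        _ ≤ a i + a j + ∑ l ∈ Finset.Ioc i j, a l := by
            exact add_le_add (add_le_add h1 h2) le_rfl
    have hsumeq : ∑ l ∈ Finset.Icc i j, c l * a l
        = a i + a j + ∑ l ∈ Finset.Ioc i j, a l := by
      have hsplit : ∑ l ∈ Finset.Icc i j, c l * a l
          = ∑ l ∈ Finset.Icc i j, a l + ∑ l ∈ Finset.Icc i j, (if l = j then a l else 0) := by
        rw [← Finset.sum_add_distrib]
        apply Finset.sum_congr rfl
        intro l _
        by_cases h : l = j <;> simp [hc, h] <;> ring
      rw [hsplit, Finset.sum_ite_eq' _ j _, if_pos hjmem,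
        ← Finset.Ioc_insert_left hij.le, Finset.sum_insert (by simp)]
      ring
    exact hsumeq ▸ hbound
  -- Step 2: Cauchy-Schwarz
  have hcs : (∑ l ∈ Finset.Icc i j, c l * a l) ^ 2
      ≤ (∑ l ∈ Finset.Icc i j, c l ^ 2) * ∑ l ∈ Finset.Icc i j, a l ^ 2 :=
    Finset.sum_mul_sq_le_sq_mul_sq _ _ _
  have hcsum : ∑ l ∈ Finset.Icc i j, c l ^ 2 = (j : ℝ) - (i : ℝ) + 4 := by
    have : ∑ l ∈ Finset.Icc i j, c l ^ 2
        = ∑ l ∈ Finset.Icc i j, (1 + if l = j then (3:ℝ) else 0) := by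
      apply Finset.sum_congr rfl
      intro l _
      by_cases h : l = j <;> simp [hc, h] <;> ring
    rw [this, Finset.sum_add_distrib, Finset.sum_const, Finset.sum_ite_eq' _ j _,
      if_pos hjmem, Nat.card_Icc]
    have : (j + 1 - i : ℕ) = (j - i + 1 : ℕ) := by omega
    rw [this]
    simp only [nsmul_eq_mul, mul_one]
    push_cast [Nat.cast_sub hij.le]
    ring
  have hnn : 0 ≤ ∑ l ∈ Finset.Icc i j, c l * a l := by
    apply Finset.sum_nonneg
    intro l _
    exact mul_nonneg (by by_cases h : l = j <;> simp [hc, h]) (hann l)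
  have hfinal : ∑ l ∈ Finset.Icc i j, c l * a l
      ≤ Real.sqrt ((j : ℝ) - (i : ℝ) + 4) * Real.sqrt (∑ l ∈ Finset.Icc i j, a l ^ 2) := by
    rw [← Real.sqrt_mul_self hnn, ← hcsum, ← Real.sqrt_mul (Finset.sum_nonneg fun l _ => sq_nonneg (c l))]
    exact Real.sqrt_le_sqrt (by rw [← pow_two]; exact hcs)
  exact hstep1.trans hfinal
end

section
/- Let (x_l)_{l≥−1} be a sequence in ℝ^d with x_{−1} = x_0, let θ_0, θ_1, … ∈ [0, 1], and define y_l := x_l + θ_l(x_l − x_{l−1}) for l ≥ 0 and S_k := Σ_{l=1}^{k} ‖x_l − x_{l−1}‖². Then for all k ≥ 1, Σ_{0 ≤ i < j < k} ‖y_i − y_j‖² ≤ ((k−1)(k+5)²/8) · S_k. -/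
private lemma auxGaussSum (m : ℕ) (c : ℝ) :
    ∑ i ∈ Finset.range m, (c - (i : ℝ)) = m * c - m * (m - 1) / 2 := by
  induction m with
  | zero => simp
  | succ n ih => rw [Finset.sum_range_succ, ih]; push_cast; ring

private lemma auxGaussId (m : ℕ) : ∑ i ∈ Finset.range m, (i : ℝ) = m * (m - 1) / 2 := by
  induction m with
  | zero => simp
  | succ n ih => rw [Finset.sum_range_succ, ih]; push_cast; ring

/-- Let `(x_l)_{l ≥ −1}` be a sequence with `x_{−1} = x_0` (encoded here with natural-number
indices, so that `x (l - 1)` at `l = 0` is `x 0`), `θ_l ∈ [0,1]`,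
`y_l = x_l + θ_l (x_l − x_{l−1})` and `S_k = Σ_{l=1}^{k} ‖x_l − x_{l−1}‖²`. Then for all
`k ≥ 1`, `Σ_{0 ≤ i < j < k} ‖y_i − y_j‖² ≤ ((k−1)(k+5)²/8) S_k`. -/
theorem sum_y_diff_sq_upperbound {d : ℕ} (x : ℕ → EuclideanSpace ℝ (Fin d))
    (θ : ℕ → ℝ) (hθ : ∀ l, θ l ∈ Set.Icc (0 : ℝ) 1)
    (y : ℕ → EuclideanSpace ℝ (Fin d))
    (hy : ∀ l, y l = x l + θ l • (x l - x (l - 1)))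
    (k : ℕ) (hk : 1 ≤ k) :
    ∑ j ∈ Finset.range k, ∑ i ∈ Finset.range j, ‖y i - y j‖ ^ 2 ≤
      ((k : ℝ) - 1) * ((k : ℝ) + 5) ^ 2 / 8 *
        ∑ l ∈ Finset.Icc 1 k, ‖x l - x (l - 1)‖ ^ 2 := by
  have hθ0 : ∀ l, 0 ≤ θ l := fun l => (hθ l).1
  have hθ1 : ∀ l, θ l ≤ 1 := fun l => (hθ l).2
  set a : ℕ → EuclideanSpace ℝ (Fin d) := fun l => x l - x (l - 1) with ha
  have ha0 : a 0 = 0 := by simp [ha]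
  -- telescoping
  have tel : ∀ i j : ℕ, i ≤ j → x j - x i = ∑ l ∈ Finset.Ioc i j, a l := by
    intro i j hij
    induction j, hij using Nat.le_induction with
    | base => simp
    | succ n hn ih =>
      rw [Finset.sum_Ioc_succ_top hn, ← ih]
      have h1 : a (n + 1) = x (n + 1) - x n := by simp [ha]
      rw [h1]; abel
  -- per-pair bound
  have key : ∀ i j : ℕ, i < j →
      ‖y i - y j‖ ^ 2 ≤ ((j : ℝ) - i + 2) *
        ∑ l ∈ Finset.Icc i j, (1 + if l = j then (1 : ℝ) else 0) * ‖a l‖ ^ 2 := by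
    intro i j hij
    have hijne : i ≠ j := hij.ne
    have hsplit : ∀ (p q s : ℝ) (r : ℕ → ℝ),
        ∑ l ∈ Finset.Icc i j, ((if l = i then p else q) + if l = j then s else 0) * r l
          = p * r i + s * r j + q * ∑ l ∈ Finset.Ioc i j, r l := by
      intro p q s r
      rw [← Finset.Ioc_insert_left hij.le, Finset.sum_insert (by simp)]
      have h1 : ∑ l ∈ Finset.Ioc i j, ((if l = i then p else q) + if l = j then s else 0) * r l
          = ∑ l ∈ Finset.Ioc i j, (q * r l + if l = j then s * r l else 0) := by
        refine Finset.sum_congr rfl fun l hl => ?_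
        have hli : l ≠ i := by have := (Finset.mem_Ioc.mp hl).1; omega
        rw [if_neg hli]; split_ifs <;> ring
      rw [h1, Finset.sum_add_distrib, Finset.sum_ite_eq' (Finset.Ioc i j) j (fun l => s * r l),
        if_pos (Finset.mem_Ioc.mpr ⟨hij, le_refl j⟩), if_pos rfl, if_neg hijne, Finset.mul_sum]
      ring
    set w : ℕ → ℝ := fun l => (if l = i then θ i else 1) + (if l = j then θ j else 0) with hw
    have hsplitW : ∀ r : ℕ → ℝ, ∑ l ∈ Finset.Icc i j, w l * r l
        = θ i * r i + θ j * r j + ∑ l ∈ Finset.Ioc i j, r l := by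
      intro r
      simp only [hw]
      rw [hsplit (θ i) 1 (θ j) r]; ring
    have hsplitT : ∀ r : ℕ → ℝ,
        ∑ l ∈ Finset.Icc i j, (1 + if l = j then (1 : ℝ) else 0) * r l
          = r i + r j + ∑ l ∈ Finset.Ioc i j, r l := by
      intro r
      have h2 : ∑ l ∈ Finset.Icc i j, (1 + if l = j then (1 : ℝ) else 0) * r l
          = ∑ l ∈ Finset.Icc i j, ((if l = i then (1:ℝ) else 1) + if l = j then (1:ℝ) else 0) * r l :=
        Finset.sum_congr rfl fun l _ => by split_ifs <;> ring
      rw [h2, hsplit 1 1 1 r]; ring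
    have hnorm : ‖y i - y j‖ ≤ ∑ l ∈ Finset.Icc i j, w l * ‖a l‖ := by
      have hyij : y i - y j = θ i • a i - θ j • a j - ∑ l ∈ Finset.Ioc i j, a l := by
        rw [hy i, hy j, ← tel i j hij.le]
        simp only [ha]
        abel
      rw [hyij, hsplitW (fun l => ‖a l‖)]
      calc ‖θ i • a i - θ j • a j - ∑ l ∈ Finset.Ioc i j, a l‖
          ≤ ‖θ i • a i - θ j • a j‖ + ‖∑ l ∈ Finset.Ioc i j, a l‖ := norm_sub_le _ _
        _ ≤ ‖θ i • a i‖ + ‖θ j • a j‖ + ‖∑ l ∈ Finset.Ioc i j, a l‖ := by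
            have := norm_sub_le (θ i • a i) (θ j • a j); linarith
        _ ≤ θ i * ‖a i‖ + θ j * ‖a j‖ + ∑ l ∈ Finset.Ioc i j, ‖a l‖ := by
            rw [norm_smul, norm_smul, Real.norm_of_nonneg (hθ0 i), Real.norm_of_nonneg (hθ0 j)]
            have := norm_sum_le (Finset.Ioc i j) a; linarith
    have hw0 : ∀ l ∈ Finset.Icc i j, 0 ≤ w l := by
      intro l _
      simp only [hw]
      have := hθ0 i; have := hθ0 j
      split_ifs <;> linarith
    have hcs : (∑ l ∈ Finset.Icc i j, w l * ‖a l‖) ^ 2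
        ≤ (∑ l ∈ Finset.Icc i j, w l) * ∑ l ∈ Finset.Icc i j, w l * ‖a l‖ ^ 2 :=
      Finset.sum_sq_le_sum_mul_sum_of_sq_eq_mul _ hw0
        (fun l hl => mul_nonneg (hw0 l hl) (sq_nonneg _)) (fun l hl => by ring)
    have hWsum : ∑ l ∈ Finset.Icc i j, w l ≤ (j : ℝ) - i + 2 := by
      have h1 := hsplitW (fun _ => (1 : ℝ))
      simp only [mul_one] at h1
      rw [h1, Finset.sum_const, Nat.card_Ioc, nsmul_eq_mul, mul_one, Nat.cast_sub hij.le]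
      have := hθ1 i; have := hθ1 j; linarith
    have hWle : ∑ l ∈ Finset.Icc i j, w l * ‖a l‖ ^ 2
        ≤ ∑ l ∈ Finset.Icc i j, (1 + if l = j then (1 : ℝ) else 0) * ‖a l‖ ^ 2 := by
      refine Finset.sum_le_sum fun l _ => ?_
      have h2 : w l ≤ 1 + if l = j then (1 : ℝ) else 0 := by
        simp only [hw]
        have := hθ0 i; have := hθ1 i; have := hθ0 j; have := hθ1 j
        split_ifs <;> linarith
      exact mul_le_mul_of_nonneg_right h2 (sq_nonneg _)
    have hji : (0:ℝ) ≤ (j : ℝ) - i + 2 := by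
      have : (i : ℝ) ≤ (j : ℝ) := by exact_mod_cast hij.le
      linarith
    calc ‖y i - y j‖ ^ 2 ≤ (∑ l ∈ Finset.Icc i j, w l * ‖a l‖) ^ 2 :=
          pow_le_pow_left₀ (norm_nonneg _) hnorm 2
      _ ≤ (∑ l ∈ Finset.Icc i j, w l) * ∑ l ∈ Finset.Icc i j, w l * ‖a l‖ ^ 2 := hcs
      _ ≤ ((j : ℝ) - i + 2) * ∑ l ∈ Finset.Icc i j, (1 + if l = j then (1 : ℝ) else 0) * ‖a l‖ ^ 2 := by
          refine mul_le_mul hWsum hWle (Finset.sum_nonneg fun l hl =>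
            mul_nonneg (hw0 l hl) (sq_nonneg _)) hji

  -- global part
  set C : ℝ := ((k : ℝ) - 1) * ((k : ℝ) + 5) ^ 2 / 8 with hC
  have hk1 : (1 : ℝ) ≤ (k : ℝ) := by exact_mod_cast hk
  have hC0 : 0 ≤ C := by
    rw [hC]
    apply div_nonneg _ (by norm_num)
    exact mul_nonneg (by linarith) (sq_nonneg _)
  -- coefficient function
  set F : ℕ → ℕ → ℕ → ℝ := fun i j l =>
    ((j : ℝ) - i + 2) * (if i ≤ l ∧ l ≤ j then (1 + if l = j then (1 : ℝ) else 0) else 0)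
    with hF
  have step1 : ∑ j ∈ Finset.range k, ∑ i ∈ Finset.range j, ‖y i - y j‖ ^ 2
      ≤ ∑ j ∈ Finset.range k, ∑ i ∈ Finset.range j,
          ∑ l ∈ Finset.range k, F i j l * ‖a l‖ ^ 2 := by
    refine Finset.sum_le_sum fun j hj => Finset.sum_le_sum fun i hi => ?_
    have hij : i < j := Finset.mem_range.mp hi
    have hjk : j < k := Finset.mem_range.mp hj
    refine le_trans (key i j hij) (le_of_eq ?_)
    have hsub : Finset.Icc i j ⊆ Finset.range k := fun l hl => by
      have := (Finset.mem_Icc.mp hl).2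
      exact Finset.mem_range.mpr (by omega)
    calc ((j : ℝ) - i + 2) * ∑ l ∈ Finset.Icc i j, (1 + if l = j then (1 : ℝ) else 0) * ‖a l‖ ^ 2
        = ∑ l ∈ Finset.Icc i j, F i j l * ‖a l‖ ^ 2 := by
          rw [Finset.mul_sum]
          refine Finset.sum_congr rfl fun l hl => ?_
          simp only [hF]
          rw [if_pos (Finset.mem_Icc.mp hl)]
          ring
      _ = ∑ l ∈ Finset.range k, F i j l * ‖a l‖ ^ 2 := by
          refine Finset.sum_subset hsub fun l hlk hl => ?_
          simp only [hF]
          rw [Finset.mem_Icc] at hl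
          rw [if_neg hl, mul_zero, zero_mul]
  have step2 : ∑ j ∈ Finset.range k, ∑ i ∈ Finset.range j,
        ∑ l ∈ Finset.range k, F i j l * ‖a l‖ ^ 2
      = ∑ l ∈ Finset.range k,
          (∑ j ∈ Finset.range k, ∑ i ∈ Finset.range j, F i j l) * ‖a l‖ ^ 2 := by
    calc ∑ j ∈ Finset.range k, ∑ i ∈ Finset.range j, ∑ l ∈ Finset.range k, F i j l * ‖a l‖ ^ 2
        = ∑ j ∈ Finset.range k, ∑ l ∈ Finset.range k, ∑ i ∈ Finset.range j, F i j l * ‖a l‖ ^ 2 :=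
          Finset.sum_congr rfl fun j _ => Finset.sum_comm
      _ = ∑ l ∈ Finset.range k, ∑ j ∈ Finset.range k, ∑ i ∈ Finset.range j, F i j l * ‖a l‖ ^ 2 :=
          Finset.sum_comm
      _ = ∑ l ∈ Finset.range k,
            (∑ j ∈ Finset.range k, ∑ i ∈ Finset.range j, F i j l) * ‖a l‖ ^ 2 := by
          refine Finset.sum_congr rfl fun l _ => ?_
          rw [Finset.sum_mul]
          exact Finset.sum_congr rfl fun j _ => (Finset.sum_mul _ _ _).symm
  -- coefficient bound
  have coef : ∀ l : ℕ, 1 ≤ l → l < k →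
      ∑ j ∈ Finset.range k, ∑ i ∈ Finset.range j, F i j l ≤ C := by
    intro l hl1 hlk
    have hl1' : (1 : ℝ) ≤ (l : ℝ) := by exact_mod_cast hl1
    have hlk' : (l : ℝ) + 1 ≤ (k : ℝ) := by exact_mod_cast hlk
    have hsum : (∑ j ∈ Finset.range k, ∑ i ∈ Finset.range j, F i j l)
        = (∑ j ∈ Finset.Ico 0 (l + 1), ∑ i ∈ Finset.range j, F i j l)
          + ∑ j ∈ Finset.Ico (l + 1) k, ∑ i ∈ Finset.range j, F i j l := by
      rw [Finset.range_eq_Ico]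
      exact (Finset.sum_Ico_consecutive _ (Nat.zero_le _) (by omega : l + 1 ≤ k)).symm
    rw [hsum]
    have e1 : ∑ j ∈ Finset.Ico 0 (l + 1), ∑ i ∈ Finset.range j, F i j l
        = 2 * ((l : ℝ) * ((l : ℝ) + 2) - (l : ℝ) * ((l : ℝ) - 1) / 2) := by
      rw [← Finset.range_eq_Ico, Finset.sum_range_succ]
      have hz : ∑ j ∈ Finset.range l, ∑ i ∈ Finset.range j, F i j l = 0 := by
        refine Finset.sum_eq_zero fun j hj => Finset.sum_eq_zero fun i hi => ?_
        have hjl : j < l := Finset.mem_range.mp hj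
        simp only [hF]
        rw [if_neg (by omega), mul_zero]
      rw [hz, zero_add]
      have hterm : ∀ i ∈ Finset.range l, F i l l = 2 * (((l : ℝ) + 2) - (i : ℝ)) := by
        intro i hi
        have := Finset.mem_range.mp hi
        simp only [hF]
        split_ifs with h1
        · ring
        · exact absurd ⟨by omega, le_refl l⟩ h1
      rw [Finset.sum_congr rfl hterm, ← Finset.mul_sum, auxGaussSum]
    have e2 : ∑ j ∈ Finset.Ico (l + 1) k, ∑ i ∈ Finset.range j, F i j l
        = ((l : ℝ) + 1) * ((k : ℝ) * ((k : ℝ) - 1) / 2 - ((l : ℝ) + 1) * (l : ℝ) / 2)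
          + (2 * ((l : ℝ) + 1) - ((l : ℝ) + 1) * (l : ℝ) / 2) * ((k : ℝ) - (l : ℝ) - 1) := by
      have hinner : ∀ j ∈ Finset.Ico (l + 1) k, ∑ i ∈ Finset.range j, F i j l
          = ((l : ℝ) + 1) * ((j : ℝ) + 2) - ((l : ℝ) + 1) * (l : ℝ) / 2 := by
        intro j hj
        have hlj : l + 1 ≤ j := (Finset.mem_Ico.mp hj).1
        have h3 : ∀ i ∈ Finset.range j, F i j l
            = if i ∈ Finset.range (l + 1) then ((j : ℝ) + 2 - (i : ℝ)) else 0 := by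
          intro i hi
          simp only [hF, Finset.mem_range]
          by_cases hil : i < l + 1
          · rw [if_pos hil, if_pos ⟨by omega, by omega⟩, if_neg (by omega)]
            ring
          · rw [if_neg hil, if_neg (by omega), mul_zero]
        rw [Finset.sum_congr rfl h3, Finset.sum_ite_mem,
          Finset.inter_eq_right.mpr (Finset.range_subset_range.mpr (by omega)),
          auxGaussSum]
        push_cast
        ring
      rw [Finset.sum_congr rfl hinner]
      have h4 : ∀ j ∈ Finset.Ico (l + 1) k,
          ((l : ℝ) + 1) * ((j : ℝ) + 2) - ((l : ℝ) + 1) * (l : ℝ) / 2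
            = ((l : ℝ) + 1) * (j : ℝ) + (2 * ((l : ℝ) + 1) - ((l : ℝ) + 1) * (l : ℝ) / 2) :=
        fun j _ => by ring
      rw [Finset.sum_congr rfl h4, Finset.sum_add_distrib, ← Finset.mul_sum,
        Finset.sum_const, Nat.card_Ico,
        Finset.sum_Ico_eq_sub (fun j => (j : ℝ)) (by omega : l + 1 ≤ k),
        auxGaussId, auxGaussId, nsmul_eq_mul, Nat.cast_sub (by omega : l + 1 ≤ k)]
      push_cast
      ring
    rw [e1, e2, hC]
    nlinarith [sq_nonneg (2 * (l : ℝ) - (k : ℝ)),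
      mul_nonneg (by linarith : (0:ℝ) ≤ (k : ℝ)) (sq_nonneg (2 * (l : ℝ) - (k : ℝ)))]
  -- finish
  have step3 : ∑ l ∈ Finset.range k,
        (∑ j ∈ Finset.range k, ∑ i ∈ Finset.range j, F i j l) * ‖a l‖ ^ 2
      ≤ C * ∑ l ∈ Finset.Icc 1 k, ‖a l‖ ^ 2 := by
    have hsplitk : ∑ l ∈ Finset.range k,
          (∑ j ∈ Finset.range k, ∑ i ∈ Finset.range j, F i j l) * ‖a l‖ ^ 2
        = ∑ l ∈ Finset.Ico 1 k,
            (∑ j ∈ Finset.range k, ∑ i ∈ Finset.range j, F i j l) * ‖a l‖ ^ 2 := by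
      have h5 : (∑ l ∈ Finset.range k,
            (∑ j ∈ Finset.range k, ∑ i ∈ Finset.range j, F i j l) * ‖a l‖ ^ 2)
          = (∑ l ∈ Finset.Ico 0 1,
              (∑ j ∈ Finset.range k, ∑ i ∈ Finset.range j, F i j l) * ‖a l‖ ^ 2)
            + ∑ l ∈ Finset.Ico 1 k,
              (∑ j ∈ Finset.range k, ∑ i ∈ Finset.range j, F i j l) * ‖a l‖ ^ 2 := by
        rw [Finset.range_eq_Ico]
        exact (Finset.sum_Ico_consecutive _ (Nat.zero_le 1) hk).symm
      have h6 : ∑ l ∈ Finset.Ico 0 1,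
          (∑ j ∈ Finset.range k, ∑ i ∈ Finset.range j, F i j l) * ‖a l‖ ^ 2 = 0 := by
        rw [show Finset.Ico 0 1 = {0} from rfl, Finset.sum_singleton, ha0]
        simp
      rw [h5, h6, zero_add]
    rw [hsplitk]
    calc ∑ l ∈ Finset.Ico 1 k,
          (∑ j ∈ Finset.range k, ∑ i ∈ Finset.range j, F i j l) * ‖a l‖ ^ 2
        ≤ ∑ l ∈ Finset.Ico 1 k, C * ‖a l‖ ^ 2 := by
          refine Finset.sum_le_sum fun l hl => ?_
          have hm := Finset.mem_Ico.mp hl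
          exact mul_le_mul_of_nonneg_right (coef l hm.1 hm.2) (sq_nonneg _)
      _ = C * ∑ l ∈ Finset.Ico 1 k, ‖a l‖ ^ 2 := (Finset.mul_sum _ _ _).symm
      _ ≤ C * ∑ l ∈ Finset.Icc 1 k, ‖a l‖ ^ 2 := by
          refine mul_le_mul_of_nonneg_left ?_ hC0
          refine Finset.sum_le_sum_of_subset_of_nonneg ?_ (fun l _ _ => sq_nonneg _)
          intro l hl
          simp only [Finset.mem_Ico] at hl
          simp only [Finset.mem_Icc]
          omega
  calc ∑ j ∈ Finset.range k, ∑ i ∈ Finset.range j, ‖y i - y j‖ ^ 2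
      ≤ ∑ j ∈ Finset.range k, ∑ i ∈ Finset.range j,
          ∑ l ∈ Finset.range k, F i j l * ‖a l‖ ^ 2 := step1
    _ = ∑ l ∈ Finset.range k,
          (∑ j ∈ Finset.range k, ∑ i ∈ Finset.range j, F i j l) * ‖a l‖ ^ 2 := step2
    _ ≤ C * ∑ l ∈ Finset.Icc 1 k, ‖a l‖ ^ 2 := step3
    _ = C * ∑ l ∈ Finset.Icc 1 k, ‖x l - x (l - 1)‖ ^ 2 := by simp only [ha]
end

section
/- (One-step potential decrease) Suppose f is differentiable with L_f-Lipschitz gradient and let L ≥ L_f. Let x_{k−1}, x_k ∈ ℝ^d, let θ_k, θ_{k+1} ∈ [0, 1] satisfy θ_{k+1}² ≤ θ_k ≤ θ_{k+1}, set y_k := x_k + θ_k(x_k − x_{k−1}) and x_{k+1} := y_k − (1/L)∇f(y_k). Suppose M_k ≥ 0 satisfies both (i) f(y_k) − f(x_k) ≤ ½⟨∇f(y_k) + ∇f(x_k), y_k − x_k⟩ + (M_k/12)‖y_k − x_k‖³ and (ii) ‖∇f(y_k) + θ_k∇f(x_{k−1}) − (1+θ_k)∇f(x_k)‖ ≤ θ_k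 M_k ‖x_k − x_{k−1}‖². Define the potentials Φ_k := f(x_k) + (θ_k²/2)(⟨∇f(x_{k−1}), x_k − x_{k−1}⟩ + (1/(2L))‖∇f(x_{k−1})‖² + L‖x_k − x_{k−1}‖²) and Φ_{k+1} := f(x_{k+1}) + (θ_{k+1}²/2)(⟨∇f(x_k), x_{k+1} − x_k⟩ + (1/(2L))‖∇f(x_k)‖² + L‖x_{k+1} − x_k‖²). Then Φ_{k+1} − Φ_k ≤ ((θ_{k+1}² + θ_k − 2)/4)·L‖x_{k+1} − x_k‖² + (7θ_k²/12)·M_k‖x_k − x_{k−1}‖³ + (θ_k³/(4L))·M_k²‖x_k − x_{k−1}‖⁴ − (θ_k²/(4L))‖∇f(x_k)‖². -/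
set_option maxHeartbeats 1000000

open RealInnerProductSpace

lemma descent_aux {d : ℕ} (f : EuclideanSpace ℝ (Fin d) → ℝ) (L : ℝ) (hL : 0 < L)
    (hf : Differentiable ℝ f)
    (hlip : ∀ a b : EuclideanSpace ℝ (Fin d), ‖gradient f a - gradient f b‖ ≤ L * ‖a - b‖)
    (x v : EuclideanSpace ℝ (Fin d)) :
    f (x + v) ≤ f x + (inner ℝ (gradient f x) v : ℝ) + L / 2 * ‖v‖ ^ 2 := by
  set g := gradient f with hg
  set k : ℝ := L / 2 * ‖v‖ ^ 2 with hk
  have hder : ∀ t : ℝ, HasDerivAt (fun t : ℝ => f (x + t • v))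
      ((inner ℝ (g (x + t • v)) v : ℝ)) t := by
    intro t
    have hc : HasDerivAt (fun t : ℝ => x + t • v) v t := by
      simpa using ((hasDerivAt_id t).smul_const v).const_add x
    have hd := ((hf (x + t • v)).hasGradientAt).hasFDerivAt.comp_hasDerivAt t hc
    simp only [hg, gradient, InnerProductSpace.toDual_symm_apply, LinearIsometryEquiv.apply_symm_apply] at hd ⊢
    exact hd
  set ψ : ℝ → ℝ := fun t => f (x + t • v) - t * (inner ℝ (g x) v : ℝ) - t ^ 2 * k with hψdef
  have hψ : ∀ t : ℝ, HasDerivAt ψ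
      ((inner ℝ (g (x + t • v)) v : ℝ) - (inner ℝ (g x) v : ℝ) - (2 * t ^ 1) * k) t := by
    intro t
    exact ((hder t).sub (hasDerivAt_mul_const _)).sub ((hasDerivAt_pow 2 t).mul_const k)
  have hψd : Differentiable ℝ ψ := fun t => (hψ t).differentiableAt
  have hanti : AntitoneOn ψ (Set.Icc (0:ℝ) 1) := by
    apply antitoneOn_of_deriv_nonpos (convex_Icc 0 1) (hψd.continuous.continuousOn)
      (hψd.differentiableOn)
    intro t ht
    rw [interior_Icc] at ht
    rw [(hψ t).deriv]
    have h1 : (inner ℝ (g (x + t • v)) v : ℝ) - (inner ℝ (g x) v : ℝ)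
        = (inner ℝ (g (x + t • v) - g x) v : ℝ) := by rw [inner_sub_left]
    have h2 : (inner ℝ (g (x + t • v) - g x) v : ℝ) ≤ ‖g (x + t • v) - g x‖ * ‖v‖ :=
      real_inner_le_norm _ _
    have h3 : ‖g (x + t • v) - g x‖ ≤ L * ‖t • v‖ := by
      simpa using hlip (x + t • v) x
    have h4 : ‖t • v‖ = t * ‖v‖ := by
      rw [norm_smul, Real.norm_eq_abs, abs_of_pos ht.1]
    have h5 : (inner ℝ (g (x + t • v) - g x) v : ℝ) ≤ L * t * ‖v‖ ^ 2 := by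
      have h6 := mul_le_mul_of_nonneg_right h3 (norm_nonneg v)
      rw [h4] at h6
      nlinarith [h2]
    simp only [pow_one, hk]
    linarith [h1, h5]
  have h01 := hanti (Set.mem_Icc.mpr ⟨le_refl 0, zero_le_one⟩)
    (Set.mem_Icc.mpr ⟨zero_le_one, le_refl 1⟩) zero_le_one
  have e0 : ψ 0 = f x := by simp [hψdef]
  have e1 : ψ 1 = f (x + v) - (inner ℝ (g x) v : ℝ) - k := by simp [hψdef]
  rw [e0, e1] at h01
  linarith

lemma key_ineq (θ τ L M r q du fu dgk df b nD nF nE ngm eu dgm fxk fyk fxk1 : ℝ)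
    (hθ0 : 0 ≤ θ) (hθ1 : θ ≤ 1) (hτsq : τ ^ 2 ≤ θ)
    (hL : 0 < L) (hM : 0 ≤ M) (hr : 0 ≤ r) (hnE : 0 ≤ nE)
    (hdesc : 2 * L * fxk1 ≤ 2 * L * fyk - (b ^ 2 + 2 * dgk + nD ^ 2))
    (hh1 : 12 * (fyk - fxk) ≤ 6 * θ * (2 * q + du) + M * θ ^ 3 * r ^ 3)
    (hh2 : nE ≤ θ * M * r ^ 2)
    (idnE : nE ^ 2 = nD ^ 2 - 2 * θ * df + θ ^ 2 * nF ^ 2)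
    (ideu : eu = du - θ * fu)
    (iddgm : dgm = dgk - df)
    (cs1 : -(nD * b) ≤ dgk) (cs2 : -(nD * ngm) ≤ dgm) (cs3 : du ≤ nD * r)
    (cs4 : -(nE * r) ≤ eu) :
    fxk1 + τ ^ 2 / 2 * ((θ * q - 1 / L * (b ^ 2 + dgk)) + 1 / (2 * L) * b ^ 2
        + L * (θ ^ 2 * r ^ 2 - 2 * θ / L * (q + du) + 1 / L ^ 2 * (b ^ 2 + 2 * dgk + nD ^ 2)))
      - (fxk + θ ^ 2 / 2 * ((q - fu) + 1 / (2 * L) * ngm ^ 2 + L * r ^ 2)) ≤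
    (τ ^ 2 + θ - 2) / 4 * L * (θ ^ 2 * r ^ 2 - 2 * θ / L * (q + du)
        + 1 / L ^ 2 * (b ^ 2 + 2 * dgk + nD ^ 2))
      + 7 * θ ^ 2 / 12 * M * r ^ 3 + θ ^ 3 / (4 * L) * M ^ 2 * r ^ 4
      - θ ^ 2 / (4 * L) * b ^ 2 := by
  have hL' : L ≠ 0 := hL.ne'
  have F2L : 0 ≤ L * (6 * θ * (2 * q + du) + M * θ ^ 3 * r ^ 3 - 12 * (fyk - fxk)) :=
    mul_nonneg hL.le (by linarith)
  have F3 : 0 ≤ L * (M * θ ^ 2 * r ^ 3 - M * θ ^ 3 * r ^ 3) := by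
    have h := mul_nonneg (mul_nonneg (mul_nonneg hθ0 hθ0) (sub_nonneg.2 hθ1))
      (mul_nonneg hM (pow_nonneg hr 3))
    have := mul_nonneg hL.le h
    linarith [this]
  have F4 : 0 ≤ L * (2 * θ ^ 2 * M * r ^ 3 + 2 * θ * (du - θ * fu)) := by
    rw [← ideu]
    have e2 : θ * r * nE ≤ θ * r * (θ * M * r ^ 2) :=
      mul_le_mul_of_nonneg_left hh2 (mul_nonneg hθ0 hr)
    have e3 : θ * -(nE * r) ≤ θ * eu := mul_le_mul_of_nonneg_left cs4 hθ0
    have e4 : 0 ≤ 2 * θ ^ 2 * M * r ^ 3 + 2 * θ * eu := by nlinarith [e2, e3]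
    exact mul_nonneg hL.le e4
  have F5 : 0 ≤ θ * (1 - θ) * (nD ^ 2 + b ^ 2) + 2 * θ * (1 - θ) * dgk := by
    have t1 : 0 ≤ (nD - b) ^ 2 + 2 * (dgk + nD * b) := by linarith [sq_nonneg (nD - b), cs1]
    have := mul_nonneg (mul_nonneg hθ0 (sub_nonneg.2 hθ1)) t1
    nlinarith [this]
  have F6 : 0 ≤ θ ^ 2 * (nD ^ 2 + ngm ^ 2) + 2 * θ ^ 2 * (dgk - df) := by
    rw [← iddgm]
    have t1 : 0 ≤ (nD - ngm) ^ 2 + 2 * (dgm + nD * ngm) := by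
      linarith [sq_nonneg (nD - ngm), cs2]
    have := mul_nonneg (sq_nonneg θ) t1
    nlinarith [this]
  have F7 : 0 ≤ (θ - τ ^ 2) * ((L * θ * r - nD) ^ 2 + 2 * (L * θ * (nD * r - du))) := by
    have t1 : 0 ≤ (L * θ * r - nD) ^ 2 + 2 * (L * θ * (nD * r - du)) := by
      have := mul_nonneg (mul_nonneg hL.le hθ0) (sub_nonneg.2 cs3)
      linarith [sq_nonneg (L * θ * r - nD), this]
    exact mul_nonneg (sub_nonneg.2 hτsq) t1
  have F8 : 0 ≤ θ ^ 3 * nF ^ 2 := by positivity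
  have F9 : 0 ≤ θ * (θ ^ 2 * M ^ 2 * r ^ 4 - (nD ^ 2 - 2 * θ * df + θ ^ 2 * nF ^ 2)) := by
    have t1 : nE ^ 2 ≤ θ ^ 2 * M ^ 2 * r ^ 4 := by nlinarith [mul_self_le_mul_self hnE hh2]
    rw [idnE] at t1
    exact mul_nonneg hθ0 (by linarith)
  rw [← mul_le_mul_iff_right₀ (show (0:ℝ) < 4 * L by positivity)]
  have EL : 4 * L * (fxk1 + τ ^ 2 / 2 * ((θ * q - 1 / L * (b ^ 2 + dgk)) + 1 / (2 * L) * b ^ 2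
        + L * (θ ^ 2 * r ^ 2 - 2 * θ / L * (q + du) + 1 / L ^ 2 * (b ^ 2 + 2 * dgk + nD ^ 2)))
      - (fxk + θ ^ 2 / 2 * ((q - fu) + 1 / (2 * L) * ngm ^ 2 + L * r ^ 2))) =
      4 * L * fxk1 + τ ^ 2 * (2 * L * θ * q - 2 * (b ^ 2 + dgk) + b ^ 2
        + 2 * (L ^ 2 * θ ^ 2 * r ^ 2 - 2 * L * θ * (q + du) + (b ^ 2 + 2 * dgk + nD ^ 2)))
      - (4 * L * fxk + θ ^ 2 * (2 * L * (q - fu) + ngm ^ 2 + 2 * L ^ 2 * r ^ 2)) := by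
    field_simp
    ring
  have ER : 4 * L * ((τ ^ 2 + θ - 2) / 4 * L * (θ ^ 2 * r ^ 2 - 2 * θ / L * (q + du)
        + 1 / L ^ 2 * (b ^ 2 + 2 * dgk + nD ^ 2))
      + 7 * θ ^ 2 / 12 * M * r ^ 3 + θ ^ 3 / (4 * L) * M ^ 2 * r ^ 4
      - θ ^ 2 / (4 * L) * b ^ 2) =
      (τ ^ 2 + θ - 2) * (L ^ 2 * θ ^ 2 * r ^ 2 - 2 * L * θ * (q + du)
        + (b ^ 2 + 2 * dgk + nD ^ 2))
      + 7 / 3 * θ ^ 2 * L * M * r ^ 3 + θ ^ 3 * M ^ 2 * r ^ 4 - θ ^ 2 * b ^ 2 := by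
    field_simp
    ring
  rw [EL, ER]
  linarith [hdesc, F2L, F3, F4, F5, F6, F7, F8, F9]

/-- **One-step potential decrease.**
Suppose `f` is differentiable with `L_f`-Lipschitz gradient (`L_f > 0`) and `L ≥ L_f`.
With `y_k = x_k + θ_k (x_k − x_{k−1})`, `x_{k+1} = y_k − (1/L)∇f(y_k)`,
`θ_{k+1}² ≤ θ_k ≤ θ_{k+1}` in `[0,1]`, and `M_k ≥ 0` satisfying the two Hessian-free
inequalities (i) and (ii), the potential
`Φ_k = f(x_k) + (θ_k²/2)(⟨∇f(x_{k−1}), x_k − x_{k−1}⟩ + ‖∇f(x_{k−1})‖²/(2L) + L‖x_k − x_{k−1}‖²)`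
satisfies the stated decrease. -/
theorem potential_decrease_iteration {d : ℕ} (f : EuclideanSpace ℝ (Fin d) → ℝ)
    (Lf L : ℝ) (hLf : 0 < Lf)
    (hf : Differentiable ℝ f)
    (hlip : ∀ a b : EuclideanSpace ℝ (Fin d), ‖gradient f a - gradient f b‖ ≤ Lf * ‖a - b‖)
    (hL : Lf ≤ L)
    (xkm xk : EuclideanSpace ℝ (Fin d)) (θk θk1 : ℝ)
    (hθk : θk ∈ Set.Icc (0 : ℝ) 1) (hθk1 : θk1 ∈ Set.Icc (0 : ℝ) 1)
    (hθsq : θk1 ^ 2 ≤ θk) (hθle : θk ≤ θk1)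
    (Mk : ℝ) (hMk : 0 ≤ Mk)
    (yk : EuclideanSpace ℝ (Fin d)) (hyk : yk = xk + θk • (xk - xkm))
    (xk1 : EuclideanSpace ℝ (Fin d)) (hxk1 : xk1 = yk - (1 / L) • gradient f yk)
    (h1 : f yk - f xk ≤ (1 / 2) * (inner ℝ (gradient f yk + gradient f xk) (yk - xk) : ℝ)
      + Mk / 12 * ‖yk - xk‖ ^ 3)
    (h2 : ‖gradient f yk + θk • gradient f xkm - (1 + θk) • gradient f xk‖ ≤
      θk * Mk * ‖xk - xkm‖ ^ 2) :
    (f xk1 + θk1 ^ 2 / 2 * ((inner ℝ (gradient f xk) (xk1 - xk) : ℝ)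
        + 1 / (2 * L) * ‖gradient f xk‖ ^ 2 + L * ‖xk1 - xk‖ ^ 2))
      - (f xk + θk ^ 2 / 2 * ((inner ℝ (gradient f xkm) (xk - xkm) : ℝ)
        + 1 / (2 * L) * ‖gradient f xkm‖ ^ 2 + L * ‖xk - xkm‖ ^ 2)) ≤
    (θk1 ^ 2 + θk - 2) / 4 * L * ‖xk1 - xk‖ ^ 2
      + 7 * θk ^ 2 / 12 * Mk * ‖xk - xkm‖ ^ 3
      + θk ^ 3 / (4 * L) * Mk ^ 2 * ‖xk - xkm‖ ^ 4
      - θk ^ 2 / (4 * L) * ‖gradient f xk‖ ^ 2 := by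
  obtain ⟨hθ0, hθ1⟩ := hθk
  have hL0 : (0:ℝ) < L := lt_of_lt_of_le hLf hL
  have hL' : L ≠ 0 := hL0.ne'
  set g := gradient f with hg
  set D := g yk - g xk with hD
  set Fv := g xk - g xkm with hFv
  set E := g yk + θk • g xkm - (1 + θk) • g xk with hE
  have hgyk : g yk = g xk + D := by rw [hD]; abel
  have hgm : g xkm = g xk - Fv := by rw [hFv]; abel
  have hEv : E = D - θk • Fv := by rw [hE, hD, hFv]; module
  have hyx : yk - xk = θk • (xk - xkm) := by rw [hyk]; abel
  have hx1k : xk1 - xk = θk • (xk - xkm) - (1 / L) • (g xk + D) := by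
    have h : xk1 - xk = (yk - xk) - (1 / L) • g yk := by rw [hxk1]; abel
    rw [hyx, hgyk] at h
    exact h
  have hxy1 : xk1 - yk = -((1 / L) • g yk) := by rw [hxk1]; abel
  -- descent step
  have hlip' : ∀ a b : EuclideanSpace ℝ (Fin d), ‖g a - g b‖ ≤ L * ‖a - b‖ := fun a b =>
    le_trans (hlip a b) (mul_le_mul_of_nonneg_right hL (norm_nonneg _))
  have ngy2 : ‖g yk‖ ^ 2 = ‖g xk‖ ^ 2 + 2 * ⟪D, g xk⟫ + ‖D‖ ^ 2 := by
    rw [hgyk, norm_add_sq_real, real_inner_comm]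
  have hdes0 := descent_aux f L hL0 hf hlip' yk (xk1 - yk)
  have hyy : yk + (xk1 - yk) = xk1 := by abel
  rw [hyy, hxy1] at hdes0
  have i1 : (inner ℝ (g yk) (-((1 / L) • g yk)) : ℝ) = -(1 / L * ‖g yk‖ ^ 2) := by
    rw [inner_neg_right, real_inner_smul_right, real_inner_self_eq_norm_sq]
  have i2 : ‖-((1 / L) • g yk)‖ ^ 2 = (1 / L) ^ 2 * ‖g yk‖ ^ 2 := by
    rw [norm_neg, norm_smul, mul_pow, Real.norm_eq_abs, sq_abs]
  rw [i1, i2] at hdes0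
  have e : f yk + -(1 / L * ‖g yk‖ ^ 2) + L / 2 * ((1 / L) ^ 2 * ‖g yk‖ ^ 2)
      = f yk - 1 / (2 * L) * ‖g yk‖ ^ 2 := by field_simp; ring
  rw [e, ngy2] at hdes0
  have hdesc_s : 2 * L * f xk1 ≤ 2 * L * f yk
      - (‖g xk‖ ^ 2 + 2 * ⟪D, g xk⟫ + ‖D‖ ^ 2) := by
    have h2L := mul_le_mul_of_nonneg_left hdes0 (by positivity : (0:ℝ) ≤ 2 * L)
    have e2 : 2 * L * (f yk - 1 / (2 * L) * (‖g xk‖ ^ 2 + 2 * ⟪D, g xk⟫ + ‖D‖ ^ 2))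
        = 2 * L * f yk - (‖g xk‖ ^ 2 + 2 * ⟪D, g xk⟫ + ‖D‖ ^ 2) := by field_simp
    linarith [h2L, e2]
  -- inequality (i) scalarized
  rw [hyx] at h1
  have j1 : (inner ℝ (g yk + g xk) (θk • (xk - xkm)) : ℝ)
      = θk * (2 * ⟪g xk, xk - xkm⟫ + ⟪D, xk - xkm⟫) := by
    rw [hgyk, real_inner_smul_right, inner_add_left, inner_add_left]
    ring
  have j2 : ‖θk • (xk - xkm)‖ = θk * ‖xk - xkm‖ := by
    rw [norm_smul, Real.norm_eq_abs, abs_of_nonneg hθ0]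
  rw [j1, j2] at h1
  have hh1_s : 12 * (f yk - f xk) ≤ 6 * θk * (2 * ⟪g xk, xk - xkm⟫ + ⟪D, xk - xkm⟫)
      + Mk * θk ^ 3 * ‖xk - xkm‖ ^ 3 := by nlinarith [h1]
  -- identities
  have idnE : ‖E‖ ^ 2 = ‖D‖ ^ 2 - 2 * θk * ⟪D, Fv⟫ + θk ^ 2 * ‖Fv‖ ^ 2 := by
    rw [hEv, norm_sub_sq_real, real_inner_smul_right, norm_smul, mul_pow,
      Real.norm_eq_abs, sq_abs]
    ring
  have ideu : ⟪E, xk - xkm⟫ = ⟪D, xk - xkm⟫ - θk * ⟪Fv, xk - xkm⟫ := by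
    rw [hEv, inner_sub_left, real_inner_smul_left]
  have iddgm : ⟪D, g xkm⟫ = ⟪D, g xk⟫ - ⟪D, Fv⟫ := by
    rw [hgm, inner_sub_right]
  -- Cauchy–Schwarz facts
  have cs1 : -(‖D‖ * ‖g xk‖) ≤ ⟪D, g xk⟫ := (abs_le.mp (abs_real_inner_le_norm _ _)).1
  have cs2 : -(‖D‖ * ‖g xkm‖) ≤ ⟪D, g xkm⟫ := (abs_le.mp (abs_real_inner_le_norm _ _)).1
  have cs3 : ⟪D, xk - xkm⟫ ≤ ‖D‖ * ‖xk - xkm‖ := real_inner_le_norm _ _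
  have cs4 : -(‖E‖ * ‖xk - xkm‖) ≤ ⟪E, xk - xkm⟫ := (abs_le.mp (abs_real_inner_le_norm _ _)).1
  -- rewrite the goal into scalar form
  have egk : (inner ℝ (g xk) (xk1 - xk) : ℝ)
      = θk * ⟪g xk, xk - xkm⟫ - 1 / L * (‖g xk‖ ^ 2 + ⟪D, g xk⟫) := by
    rw [hx1k, inner_sub_right, real_inner_smul_right, real_inner_smul_right,
      inner_add_right, real_inner_self_eq_norm_sq, real_inner_comm (g xk) D]
  have enh : ‖xk1 - xk‖ ^ 2 = θk ^ 2 * ‖xk - xkm‖ ^ 2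
      - 2 * θk / L * (⟪g xk, xk - xkm⟫ + ⟪D, xk - xkm⟫)
      + 1 / L ^ 2 * (‖g xk‖ ^ 2 + 2 * ⟪D, g xk⟫ + ‖D‖ ^ 2) := by
    rw [hx1k, norm_sub_sq_real, real_inner_smul_left, real_inner_smul_right,
      inner_add_right, norm_smul, norm_smul, mul_pow, mul_pow, Real.norm_eq_abs,
      Real.norm_eq_abs, sq_abs, sq_abs, norm_add_sq_real,
      real_inner_comm (xk - xkm) (g xk), real_inner_comm (xk - xkm) D,
      real_inner_comm (g xk) D]
    ring
  have egm : (inner ℝ (g xkm) (xk - xkm) : ℝ) = ⟪g xk, xk - xkm⟫ - ⟪Fv, xk - xkm⟫ := by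
    rw [hgm, inner_sub_left]
  rw [egk, enh, egm]
  exact key_ineq θk θk1 L Mk ‖xk - xkm‖ ⟪g xk, xk - xkm⟫ ⟪D, xk - xkm⟫ ⟪Fv, xk - xkm⟫
    ⟪D, g xk⟫ ⟪D, Fv⟫ ‖g xk‖ ‖D‖ ‖Fv‖ ‖E‖ ‖g xkm‖ ⟪E, xk - xkm⟫ ⟪D, g xkm⟫
    (f xk) (f yk) (f xk1)
    hθ0 hθ1 hθsq hL0 hMk (norm_nonneg _) (norm_nonneg _)
    hdesc_s hh1_s h2 idnE ideu iddgm cs1 cs2 cs3 cs4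
end

section
/- Let f : ℝ^d → ℝ be differentiable. Set θ_i := i/(i+1) for i ≥ 1, and let sequences (x_i), (y_i) in ℝ^d satisfy x_{−1} = x_0 = y_0 and, for i ≥ 1, x_i = y_{i−1} − (1/L)∇f(y_{i−1}) and y_i = x_i + θ_i(x_i − x_{i−1}), where 0 < L ≤ L̄. Define Z_i := (i+1)/2, ȳ_i := (2/(i(i+1))) Σ_{j=0}^{i−1} (j+1) y_j and S_i := Σ_{l=1}^{i} ‖x_l − x_{l−1}‖². Let M_0 ≤ M_1 ≤ M_2 ≤ … be positive numbers such that for each i ≥ 1, ‖∇f(ȳ_i)‖ ≤ (L/Z_i)‖x_i − x_{i−1}‖ + ((i−1)(i+5)²/(16 Z_i²))·M_i·S_i. Let k ≥ 2 and suppose M_{k−1}² S_{k−1} ≤ L²/k^5. Then min_{1≤i<k} ‖∇f(ȳ_i)‖ ≤ 4L·√(S_{k−1}/k³) ≤ 4 L̄² / (M_0 k⁴). -/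
noncomputable section

/-- `S_i = Σ_{l=1}^{i} ‖x_l − x_{l−1}‖²`. -/
def Sseq {d : ℕ} (x : ℕ → EuclideanSpace ℝ (Fin d)) (i : ℕ) : ℝ :=
  ∑ l ∈ Finset.Icc 1 i, ‖x l - x (l - 1)‖ ^ 2

/-- `ȳ_i = (2/(i(i+1))) Σ_{j=0}^{i−1} (j+1) y_j`. -/
def ybarSeq {d : ℕ} (y : ℕ → EuclideanSpace ℝ (Fin d)) (i : ℕ) :
    EuclideanSpace ℝ (Fin d) :=
  (2 / ((i : ℝ) * ((i : ℝ) + 1))) • ∑ j ∈ Finset.range i, ((j : ℝ) + 1) • y j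

private lemma sum_sq_lb (n : ℕ) (hn : 1 ≤ n) :
    ((n : ℝ) + 1) ^ 3 ≤ 3 * ∑ i ∈ Finset.Icc 1 n, ((i : ℝ) + 1) ^ 2 := by
  induction n, hn using Nat.le_induction with
  | base => simp [Finset.Icc_self]; norm_num
  | succ n hn ih =>
    rw [Finset.sum_Icc_succ_top (by omega : 1 ≤ n + 1)]
    push_cast
    push_cast at ih
    nlinarith [ih, Nat.cast_nonneg (α := ℝ) n]

set_option maxHeartbeats 2000000 in
/-- Bound on the smallest gradient norm of the averaged iterates, assuming the estimates
`M_i` themselves control `‖∇f(ȳ_i)‖` (as in the update rule (17)): with `θ_i = i/(i+1)`,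
`Z_i = (i+1)/2`, AGD iterates from `x_{−1} = x_0 = y_0` with step `1/L` (`0 < L ≤ L̄`),
nondecreasing positive `M_i` with
`‖∇f(ȳ_i)‖ ≤ (L/Z_i)‖x_i − x_{i−1}‖ + ((i−1)(i+5)²/(16 Z_i²)) M_i S_i` for `i ≥ 1`,
`k ≥ 2` and `M_{k−1}² S_{k−1} ≤ L²/k⁵`, one has
`min_{1≤i<k} ‖∇f(ȳ_i)‖ ≤ 4L √(S_{k−1}/k³) ≤ 4 L̄²/(M_0 k⁴)`. -/
theorem grad_norm_ybar_upperbound_tight {d : ℕ} (f : EuclideanSpace ℝ (Fin d) → ℝ)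
    (hf : Differentiable ℝ f)
    (L Lbar : ℝ) (hL : 0 < L) (hLbar : L ≤ Lbar)
    (x y : ℕ → EuclideanSpace ℝ (Fin d)) (hy0 : y 0 = x 0)
    (hx : ∀ i, x (i + 1) = y i - (1 / L) • gradient f (y i))
    (hy : ∀ i, y (i + 1) = x (i + 1)
      + (((i : ℝ) + 1) / ((i : ℝ) + 2)) • (x (i + 1) - x i))
    (M : ℕ → ℝ) (hM0 : 0 < M 0) (hMmono : Monotone M)
    (hMbound : ∀ i, 1 ≤ i →
      ‖gradient f (ybarSeq y i)‖ ≤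
        L / (((i : ℝ) + 1) / 2) * ‖x i - x (i - 1)‖ +
          ((i : ℝ) - 1) * ((i : ℝ) + 5) ^ 2 / (16 * (((i : ℝ) + 1) / 2) ^ 2) *
            M i * Sseq x i)
    (k : ℕ) (hk : 2 ≤ k)
    (hS : M (k - 1) ^ 2 * Sseq x (k - 1) ≤ L ^ 2 / (k : ℝ) ^ 5) :
    sInf ((fun i => ‖gradient f (ybarSeq y i)‖) '' Set.Ico 1 k) ≤
        4 * L * Real.sqrt (Sseq x (k - 1) / (k : ℝ) ^ 3) ∧
      4 * L * Real.sqrt (Sseq x (k - 1) / (k : ℝ) ^ 3) ≤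
        4 * Lbar ^ 2 / (M 0 * (k : ℝ) ^ 4) := by
  have hk1 : 1 ≤ k - 1 := by omega
  have hkR : (2 : ℝ) ≤ (k : ℝ) := by exact_mod_cast hk
  have hkpos : (0 : ℝ) < (k : ℝ) := by linarith
  have hkm1 : ((k - 1 : ℕ) : ℝ) = (k : ℝ) - 1 := by
    have : ((k - 1 : ℕ) : ℝ) = ((k : ℕ) : ℝ) - (1 : ℕ) := by
      rw [Nat.cast_sub (by omega)]
    simpa using this
  set S := Sseq x (k - 1) with hSdef
  have hSnn : 0 ≤ S := Finset.sum_nonneg fun _ _ => sq_nonneg _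
  clear_value S
  set r := Real.sqrt (S / (k : ℝ) ^ 3) with hrdef
  have hrnn : 0 ≤ r := hrdef ▸ Real.sqrt_nonneg _
  have hr2 : r ^ 2 = S / (k : ℝ) ^ 3 := hrdef ▸ Real.sq_sqrt (by positivity)
  clear_value r
  have hS3 : S = r ^ 2 * (k : ℝ) ^ 3 := by
    rw [hr2]; field_simp
  -- second inequality
  have hMk1pos : 0 < M (k - 1) := lt_of_lt_of_le hM0 (hMmono (Nat.zero_le _))
  have hsecond : 4 * L * r ≤ 4 * Lbar ^ 2 / (M 0 * (k : ℝ) ^ 4) := by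
    have hM0k : M 0 ^ 2 * S ≤ L ^ 2 / (k : ℝ) ^ 5 := by
      have h1 : M 0 ^ 2 ≤ M (k - 1) ^ 2 := by
        nlinarith [hMmono (Nat.zero_le (k - 1)), hM0]
      nlinarith [hS, hSnn, mul_le_mul_of_nonneg_right h1 hSnn]
    have h2 : S / (k : ℝ) ^ 3 ≤ (L / (M 0 * (k : ℝ) ^ 4)) ^ 2 := by
      rw [div_pow, div_le_div_iff₀ (by positivity) (by positivity)]
      have h3 : M 0 ^ 2 * S * (k : ℝ) ^ 5 ≤ L ^ 2 := by
        rw [← le_div_iff₀ (by positivity)]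
        calc M 0 ^ 2 * S ≤ L ^ 2 / (k : ℝ) ^ 5 := hM0k
          _ = L ^ 2 / (k : ℝ) ^ 5 := rfl
      nlinarith [h3, pow_pos hkpos 3, sq_nonneg (M 0), hSnn, pow_pos hkpos 5]
    have hr_le : r ≤ L / (M 0 * (k : ℝ) ^ 4) := by
      calc r ≤ Real.sqrt ((L / (M 0 * (k : ℝ) ^ 4)) ^ 2) := hrdef ▸ Real.sqrt_le_sqrt h2
        _ = L / (M 0 * (k : ℝ) ^ 4) := Real.sqrt_sq (by positivity)
    have hL2 : L ^ 2 ≤ Lbar ^ 2 := by nlinarith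
    calc 4 * L * r ≤ 4 * L * (L / (M 0 * (k : ℝ) ^ 4)) := by
          gcongr
      _ = 4 * L ^ 2 / (M 0 * (k : ℝ) ^ 4) := by ring
      _ ≤ 4 * Lbar ^ 2 / (M 0 * (k : ℝ) ^ 4) := by gcongr
  -- first inequality
  set W := ∑ i ∈ Finset.Icc 1 (k - 1), ((i : ℝ) + 1) ^ 2 with hWdef
  have hW : (k : ℝ) ^ 3 ≤ 3 * W := by
    have h := sum_sq_lb (k - 1) hk1
    rw [hkm1] at h
    have h3 : ((k : ℝ) - 1 + 1) ^ 3 = (k : ℝ) ^ 3 := by ring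
    rw [h3] at h
    rw [hWdef]
    exact h
  clear_value W
  have hWpos : 0 < W := by
    have hk3 : (0 : ℝ) < (k : ℝ) ^ 3 := by positivity
    linarith
  obtain ⟨i, hi, hii⟩ : ∃ i ∈ Finset.Icc 1 (k - 1),
      W * ‖x i - x (i - 1)‖ ^ 2 ≤ ((i : ℝ) + 1) ^ 2 * S := by
    by_contra hcon
    push_neg at hcon
    have hne : (Finset.Icc 1 (k - 1)).Nonempty := Finset.nonempty_Icc.mpr hk1
    have hlt := Finset.sum_lt_sum_of_nonempty hne hcon
    rw [← Finset.sum_mul, ← Finset.mul_sum] at hlt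
    have hSsum : S = ∑ l ∈ Finset.Icc 1 (k - 1), ‖x l - x (l - 1)‖ ^ 2 := by
      rw [hSdef, Sseq]
    rw [← hWdef, ← hSsum] at hlt
    exact absurd (mul_comm W S ▸ hlt) (lt_irrefl _)
  obtain ⟨hi1, hik⟩ := Finset.mem_Icc.mp hi
  have hi1R : (1 : ℝ) ≤ (i : ℝ) := by exact_mod_cast hi1
  have hikR : (i : ℝ) + 1 ≤ (k : ℝ) := by
    have : (i : ℝ) ≤ ((k - 1 : ℕ) : ℝ) := by exact_mod_cast hik
    rw [hkm1] at this; linarith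
  have hipos : (0 : ℝ) < (i : ℝ) + 1 := by linarith
  set N := ‖x i - x (i - 1)‖ with hNdef
  have hNnn : 0 ≤ N := hNdef ▸ norm_nonneg _
  clear_value N
  -- N² ≤ 3 (i+1)² r²
  have hN2 : N ^ 2 ≤ 3 * ((i : ℝ) + 1) ^ 2 * r ^ 2 := by
    have h1 : W * N ^ 2 ≤ ((i : ℝ) + 1) ^ 2 * (r ^ 2 * (k : ℝ) ^ 3) := by
      rw [← hS3]; exact hii
    nlinarith [h1, hWpos, sq_nonneg N, sq_nonneg r,
      mul_le_mul_of_nonneg_left hW (mul_nonneg (sq_nonneg ((i : ℝ) + 1)) (sq_nonneg r))]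
  have hN : N ≤ 7 / 4 * (((i : ℝ) + 1) * r) := by
    have hb : (0 : ℝ) ≤ 7 / 4 * (((i : ℝ) + 1) * r) := by positivity
    have hsq : N ^ 2 ≤ (7 / 4 * (((i : ℝ) + 1) * r)) ^ 2 := by
      nlinarith [hN2, mul_nonneg (sq_nonneg ((i : ℝ) + 1)) (sq_nonneg r)]
    exact le_of_pow_le_pow_left₀ two_ne_zero hb hsq
  have hT1 : L / (((i : ℝ) + 1) / 2) * N ≤ 7 / 2 * L * r := by
    rw [div_mul_eq_mul_div, div_le_iff₀ (by positivity : (0:ℝ) < ((i : ℝ) + 1) / 2)]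
    nlinarith [mul_le_mul_of_nonneg_left hN hL.le]
  -- second term
  have hSmono : Sseq x i ≤ S := by
    rw [hSdef]
    simp only [Sseq]
    apply Finset.sum_le_sum_of_subset_of_nonneg
      (Finset.Icc_subset_Icc_right hik)
    intro _ _ _; exact sq_nonneg _
  have hSi_nn : 0 ≤ Sseq x i := Finset.sum_nonneg fun _ _ => sq_nonneg _
  have hMipos : 0 < M i := lt_of_lt_of_le hM0 (hMmono (Nat.zero_le _))
  have hMS : M i * Sseq x i ≤ M (k - 1) * S :=
    mul_le_mul (hMmono hik) hSmono hSi_nn hMk1pos.le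
  have hMS2 : (M (k - 1) * S) ^ 2 ≤ L ^ 2 * r ^ 2 / (k : ℝ) ^ 2 := by
    have h1 : M (k - 1) ^ 2 * S * S ≤ L ^ 2 / (k : ℝ) ^ 5 * S :=
      mul_le_mul_of_nonneg_right hS hSnn
    have h2 : L ^ 2 / (k : ℝ) ^ 5 * S = L ^ 2 * r ^ 2 / (k : ℝ) ^ 2 := by
      rw [hS3]; field_simp
    calc (M (k - 1) * S) ^ 2 = M (k - 1) ^ 2 * S * S := by ring
      _ ≤ L ^ 2 / (k : ℝ) ^ 5 * S := h1
      _ = L ^ 2 * r ^ 2 / (k : ℝ) ^ 2 := h2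
  have hMSk : (k : ℝ) / 2 * (M (k - 1) * S) ≤ 1 / 2 * L * r := by
    have hMSnn : 0 ≤ M (k - 1) * S := mul_nonneg hMk1pos.le hSnn
    have hb : (0 : ℝ) ≤ 1 / 2 * L * r := by positivity
    have hsq : ((k : ℝ) / 2 * (M (k - 1) * S)) ^ 2 ≤ (1 / 2 * L * r) ^ 2 := by
      have h3 := mul_le_mul_of_nonneg_left hMS2 (by positivity : (0:ℝ) ≤ (k : ℝ) ^ 2 / 4)
      have h4 : (k : ℝ) ^ 2 / 4 * (L ^ 2 * r ^ 2 / (k : ℝ) ^ 2) = (1 / 2 * L * r) ^ 2 := by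
        field_simp; ring
      calc ((k : ℝ) / 2 * (M (k - 1) * S)) ^ 2
          = (k : ℝ) ^ 2 / 4 * (M (k - 1) * S) ^ 2 := by ring
        _ ≤ (k : ℝ) ^ 2 / 4 * (L ^ 2 * r ^ 2 / (k : ℝ) ^ 2) := h3
        _ = (1 / 2 * L * r) ^ 2 := h4
    exact le_of_pow_le_pow_left₀ two_ne_zero hb hsq
  have hC : ((i : ℝ) - 1) * ((i : ℝ) + 5) ^ 2 / (16 * (((i : ℝ) + 1) / 2) ^ 2)
      ≤ ((i : ℝ) + 1) / 2 := by
    rw [div_le_iff₀ (by positivity)]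
    nlinarith [sq_nonneg ((i : ℝ) - 3), hi1R]
  have hCnn : 0 ≤ ((i : ℝ) - 1) * ((i : ℝ) + 5) ^ 2 / (16 * (((i : ℝ) + 1) / 2) ^ 2) := by
    apply div_nonneg
    · exact mul_nonneg (by linarith) (sq_nonneg _)
    · positivity
  have hT2 : ((i : ℝ) - 1) * ((i : ℝ) + 5) ^ 2 / (16 * (((i : ℝ) + 1) / 2) ^ 2)
      * M i * Sseq x i ≤ 1 / 2 * L * r := by
    have hCk : ((i : ℝ) - 1) * ((i : ℝ) + 5) ^ 2 / (16 * (((i : ℝ) + 1) / 2) ^ 2)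
        ≤ (k : ℝ) / 2 := le_trans hC (by linarith)
    have hMiSnn : 0 ≤ M i * Sseq x i := mul_nonneg hMipos.le hSi_nn
    calc ((i : ℝ) - 1) * ((i : ℝ) + 5) ^ 2 / (16 * (((i : ℝ) + 1) / 2) ^ 2)
          * M i * Sseq x i
        = ((i : ℝ) - 1) * ((i : ℝ) + 5) ^ 2 / (16 * (((i : ℝ) + 1) / 2) ^ 2)
          * (M i * Sseq x i) := by ring
      _ ≤ (k : ℝ) / 2 * (M (k - 1) * S) :=
          mul_le_mul hCk hMS hMiSnn (by positivity)
      _ ≤ 1 / 2 * L * r := hMSk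
  have hbound : ‖gradient f (ybarSeq y i)‖ ≤ 4 * L * r := by
    have hb := hMbound i hi1
    rw [← hNdef] at hb
    calc ‖gradient f (ybarSeq y i)‖
        ≤ L / (((i : ℝ) + 1) / 2) * N +
          ((i : ℝ) - 1) * ((i : ℝ) + 5) ^ 2 / (16 * (((i : ℝ) + 1) / 2) ^ 2) *
            M i * Sseq x i := hb
      _ ≤ 7 / 2 * L * r + 1 / 2 * L * r := add_le_add hT1 hT2
      _ = 4 * L * r := by ring
  refine ⟨?_, hsecond⟩
  have hmem : ‖gradient f (ybarSeq y i)‖ ∈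
      (fun i => ‖gradient f (ybarSeq y i)‖) '' Set.Ico 1 k :=
    ⟨i, ⟨hi1, by omega⟩, rfl⟩
  have hbdd : BddBelow ((fun i => ‖gradient f (ybarSeq y i)‖) '' Set.Ico 1 k) := by
    refine ⟨0, ?_⟩
    rintro z ⟨j, -, rfl⟩
    exact norm_nonneg _
  exact le_trans (csInf_le hbdd hmem) hbound
end
end
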